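/- arXiv:math/0605456 — 13 statements merged into one kernel-verified Lean document; each statement's English description precedes it below -/
import Mathlib

section
/- Let a group G act on a set I. Then every orbit of the action is infinite if and only if for every pair of finite subsets A, B of I there exists g in G with (g·A) ∩ B = ∅. -/
open scoped Pointwise

/-- Every orbit of a group action on a set is infinite iff for all finite
subsets `A`, `B` of the set there is a group element `g` with `g • A ∩ B = ∅`. -/
theorem orbits_infinite_iff_weakly_mixing {G I : Type*} [Group G] [MulAction G I] :
    (∀ i : I, (MulAction.orbit G i).Infinite) ↔
      (∀ A B : Set I, A.Finite → B.Finite → ∃ g : G, (g • A) ∩ B = ∅) := by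
  classical
  constructor
  · intro horb A B hA hB
    by_contra hcon
    push_neg at hcon
    -- for each g, there are a ∈ A, b ∈ B with g • a = b
    have hcon' : ∀ g : G, ∃ a ∈ A, ∃ b ∈ B, g • a = b := by
      intro g
      obtain ⟨x, hx⟩ := hcon g
      obtain ⟨⟨a, ha, rfl⟩, hxB⟩ := hx
      exact ⟨a, ha, _, hxB, rfl⟩
    -- set up a coset cover
    let s : Finset (I × I) :=
      (hA.toFinset ×ˢ hB.toFinset).filter (fun p => ∃ g : G, g • p.1 = p.2)
    let g : I × I → G := fun p =>
      if h : ∃ g : G, g • p.1 = p.2 then h.choose else 1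
    let H : I × I → Subgroup G := fun p => MulAction.stabilizer G p.1
    have hcovers : ⋃ p ∈ s, (g p) • (H p : Set G) = Set.univ := by
      rw [Set.eq_univ_iff_forall]
      intro x
      obtain ⟨a, ha, b, hb, hab⟩ := hcon' x
      have hex : ∃ g : G, g • (a, b).1 = (a, b).2 := ⟨x, hab⟩
      have hps : (a, b) ∈ s := by
        simp only [s, Finset.mem_filter, Finset.mem_product, Set.Finite.mem_toFinset]
        exact ⟨⟨ha, hb⟩, hex⟩
      refine Set.mem_biUnion hps ?_
      rw [mem_leftCoset_iff, SetLike.mem_coe, MulAction.mem_stabilizer_iff]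
      have hg : g (a, b) • a = b := by
        simpa only [g, dif_pos hex] using hex.choose_spec
      rw [mul_smul, hab, inv_smul_eq_iff, hg]
    obtain ⟨p, _, hfi⟩ := Subgroup.exists_finiteIndex_of_leftCoset_cover hcovers
    haveI := hfi
    have : Finite (G ⧸ MulAction.stabilizer G p.1) := inferInstance
    have : Finite (MulAction.orbit G p.1) :=
      Finite.of_equiv _ (MulAction.orbitEquivQuotientStabilizer G p.1).symm
    exact (horb p.1) (Set.toFinite _)
  · intro h i
    intro hfin
    obtain ⟨g, hg⟩ := h (MulAction.orbit G i) (MulAction.orbit G i) hfin hfin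
    have : g • i ∈ (g • MulAction.orbit G i) ∩ MulAction.orbit G i := by
      refine ⟨⟨i, MulAction.mem_orbit_self i, rfl⟩, MulAction.mem_orbit i g⟩
    rw [hg] at this
    exact this
end

section
/- Let Γ₀ be a subgroup of a group Γ such that the quasi-normalizer of Γ₀ in Γ equals Γ₀ (i.e., every element of Γ whose double coset behavior is finite lies in Γ₀; concretely assume: for every g ∈ Γ with g ∉ Γ₀, the subgroup Γ₀ ∩ gΓ₀g⁻¹ has infinite index in Γ₀). If s ∈ Γ with s ∉ Γ₀ and A, B ⊆ Γ are finite subsets, then there exist t, r ∈ Γ₀ such that t s r ∉ A Γ₀ B. -/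
/-!
If `t * s * r = a * γ * b` with `γ ∈ Γ₀`, then either `b ∈ Γ₀` and `t` lies in the left coset
`a s⁻¹ · (s Γ₀ s⁻¹)`, or `b ∉ Γ₀` and `r` lies in the left coset `s⁻¹ t⁻¹ a b · (b⁻¹ Γ₀ b)`.
All these conjugates meet `Γ₀` in subgroups of infinite index, and by B. H. Neumann's lemma
finitely many left cosets of such subgroups cannot cover `Γ₀`; so one first picks `t` avoiding
the cosets of the first kind and then `r` avoiding those of the second kind.
-/

open scoped Pointwise

namespace Subgroup

variable {G : Type*} [Group G]

theorem preimage_leftCoset_subset_leftCoset_subgroupOf (H K : Subgroup G) {g : G} {c : H}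
    (hc : (c : G) ∈ g • (K : Set G)) :
    ((↑) : H → G) ⁻¹' (g • (K : Set G)) ⊆ c • ((K.subgroupOf H : Subgroup H) : Set H) := by
  intro t ht
  rw [Set.mem_preimage, mem_leftCoset_iff] at ht
  rw [mem_leftCoset_iff] at hc
  rw [mem_leftCoset_iff, SetLike.mem_coe, mem_subgroupOf]
  simpa [mul_assoc] using K.mul_mem (K.inv_mem hc) ht

theorem exists_mem_forall_notMem_leftCoset_of_relIndex_eq_zero (H : Subgroup G) {ι : Type*}
    {s : Set ι} (hs : s.Finite) (g : ι → G) (K : ι → Subgroup G)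
    (hK : ∀ i ∈ s, (K i).relIndex H = 0) :
    ∃ t ∈ H, ∀ i ∈ s, t ∉ g i • (K i : Set G) := by
  by_contra! hcov
  -- a point of `H` in each coset meeting `H`; junk where the coset misses `H`
  let c : ι → H := fun i => Classical.epsilon fun c : H => (c : G) ∈ g i • (K i : Set G)
  have hcover : ⋃ i ∈ hs.toFinset, c i • (((K i).subgroupOf H : Subgroup H) : Set H) =
      Set.univ := by
    refine Set.eq_univ_of_forall fun t => ?_
    obtain ⟨i, hi, ht⟩ := hcov t t.2
    refine Set.mem_biUnion (hs.mem_toFinset.mpr hi) ?_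
    exact preimage_leftCoset_subset_leftCoset_subgroupOf H (K i)
      (Classical.epsilon_spec (p := fun c : H => (c : G) ∈ g i • (K i : Set G)) ⟨t, ht⟩) ht
  obtain ⟨i, hi, hfin⟩ := exists_finiteIndex_of_leftCoset_cover hcover
  exact hfin.index_ne_zero (hK i (hs.mem_toFinset.mp hi))

end Subgroup

/-- Lemma "astuce": if the quasi-normalizer of `Γ₀` in `Γ` equals `Γ₀`
(concretely: `Γ₀ ∩ gΓ₀g⁻¹` has infinite index in `Γ₀` for all `g ∉ Γ₀`),
then for `s ∉ Γ₀` and finite sets `A B ⊆ Γ` there exist `t, r ∈ Γ₀` with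
`t * s * r ∉ A Γ₀ B`. -/
theorem astuce {Γ : Type*} [Group Γ] (Γ₀ : Subgroup Γ)
    (hqn : ∀ g : Γ, g ∉ Γ₀ →
      (Subgroup.map (MulAut.conj g).toMonoidHom Γ₀).relIndex Γ₀ = 0)
    (s : Γ) (hs : s ∉ Γ₀) (A B : Set Γ) (hA : A.Finite) (hB : B.Finite) :
    ∃ t ∈ Γ₀, ∃ r ∈ Γ₀, t * s * r ∉ A * (Γ₀ : Set Γ) * B := by
  obtain ⟨t, ht₀, ht⟩ := Γ₀.exists_mem_forall_notMem_leftCoset_of_relIndex_eq_zero hA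
    (fun a => a * s⁻¹) (fun _ => Γ₀.map (MulAut.conj s).toMonoidHom) (fun _ _ => hqn s hs)
  obtain ⟨r, hr₀, hr⟩ := Γ₀.exists_mem_forall_notMem_leftCoset_of_relIndex_eq_zero
    (hA.prod (hB.subset (Set.sep_subset B (· ∉ Γ₀))))
    (fun p => s⁻¹ * t⁻¹ * p.1 * p.2) (fun p => Γ₀.map (MulAut.conj p.2⁻¹).toMonoidHom)
    (fun p hp => hqn _ (inv_mem_iff.not.mpr hp.2.2))
  refine ⟨t, ht₀, r, hr₀, ?_⟩
  rintro ⟨_, ⟨a, ha, γ, hγ, rfl⟩, b, hb, hγb⟩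
  have hγ' : a⁻¹ * (t * s * r) * b⁻¹ ∈ Γ₀ := by
    rwa [← hγb, show a⁻¹ * (a * γ * b) * b⁻¹ = γ by group]
  by_cases hbΓ₀ : b ∈ Γ₀
  · refine ht a ha ?_
    rw [mem_leftCoset_iff, SetLike.mem_coe, Subgroup.mem_map_equiv, MulAut.conj_symm_apply]
    convert Γ₀.mul_mem (Γ₀.mul_mem hγ' hbΓ₀) (Γ₀.inv_mem hr₀) using 1
    group
  · refine hr (a, b) ⟨ha, hb, hbΓ₀⟩ ?_
    rw [mem_leftCoset_iff, SetLike.mem_coe, Subgroup.mem_map_equiv, MulAut.conj_symm_apply]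
    convert hγ' using 1
    group
end

section
/- Let Γ₀ ≤ Γ be such that for all g ∈ Γ \ Γ₀, the subgroup Γ₀ ∩ gΓ₀g⁻¹ has infinite index in Γ₀. Then for every finite subsets A, B ⊆ Γ with B disjoint from Γ₀, there exists t ∈ Γ₀ such that t ∉ A Γ₀ B. -/
open scoped Pointwise

/-! Suppose `Γ₀ ⊆ A Γ₀ B`. Each piece `Γ₀ ∩ a Γ₀ b` lies in a single left coset of
`Γ₀ ∩ b⁻¹ Γ₀ b` in `Γ₀`, so `Γ₀` is covered by finitely many left cosets of such subgroups.
By B. H. Neumann's lemma one of them has finite index in `Γ₀`, contradicting the hypothesis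
applied to `b⁻¹ ∉ Γ₀`. -/

namespace Subgroup

variable {Γ : Type*} [Group Γ] (Γ₀ : Subgroup Γ)

theorem inv_mul_mem_map_conj_of_mem_singleton_mul_singleton {a b t t' : Γ}
    (ht : t ∈ {a} * (Γ₀ : Set Γ) * {b}) (ht' : t' ∈ {a} * (Γ₀ : Set Γ) * {b}) :
    t⁻¹ * t' ∈ Γ₀.map (MulAut.conj b⁻¹).toMonoidHom := by
  obtain ⟨_, ⟨_, rfl, x, hx, rfl⟩, _, rfl, rfl⟩ := ht
  obtain ⟨_, ⟨_, rfl, x', hx', rfl⟩, _, rfl, rfl⟩ := ht'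
  refine ⟨x⁻¹ * x', Γ₀.mul_mem (Γ₀.inv_mem hx) hx', ?_⟩
  simp only [MulEquiv.coe_toMonoidHom, MulAut.conj_apply]
  group

theorem exists_subset_leftCoset_subgroupOf_map_conj (a b : Γ) :
    ∃ g : Γ₀, ∀ t : Γ₀, (t : Γ) ∈ {a} * (Γ₀ : Set Γ) * {b} →
      t ∈ g • ((Γ₀.map (MulAut.conj b⁻¹).toMonoidHom).subgroupOf Γ₀ : Set Γ₀) := by
  by_cases hne : ∃ g : Γ₀, (g : Γ) ∈ {a} * (Γ₀ : Set Γ) * {b}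
  · obtain ⟨g, hg⟩ := hne
    exact ⟨g, fun t ht => mem_leftCoset_iff g |>.mpr <|
      inv_mul_mem_map_conj_of_mem_singleton_mul_singleton Γ₀ hg ht⟩
  · exact ⟨1, fun t ht => (hne ⟨t, ht⟩).elim⟩

end Subgroup

/-- If `Γ₀ ∩ gΓ₀g⁻¹` has infinite index in `Γ₀` for all `g ∉ Γ₀`, then for all
finite subsets `A B ⊆ Γ` with `B` disjoint from `Γ₀` there exists `t ∈ Γ₀`
with `t ∉ A Γ₀ B`. -/
theorem exists_mem_not_mem_mul_coset {Γ : Type*} [Group Γ] (Γ₀ : Subgroup Γ)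
    (hqn : ∀ g : Γ, g ∉ Γ₀ →
      (Subgroup.map (MulAut.conj g).toMonoidHom Γ₀).relIndex Γ₀ = 0)
    (A B : Set Γ) (hA : A.Finite) (hB : B.Finite) (hdisj : B ∩ (Γ₀ : Set Γ) = ∅) :
    ∃ t ∈ Γ₀, t ∉ A * (Γ₀ : Set Γ) * B := by
  by_contra! hcon
  choose g hg using Γ₀.exists_subset_leftCoset_subgroupOf_map_conj
  have hcovers : ⋃ p ∈ hA.toFinset ×ˢ hB.toFinset, g p.1 p.2 •
      ((Γ₀.map (MulAut.conj p.2⁻¹).toMonoidHom).subgroupOf Γ₀ : Set Γ₀) = Set.univ := by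
    refine Set.eq_univ_of_forall fun t => ?_
    obtain ⟨_, ⟨a, ha, x, hx, rfl⟩, b, hb, habt⟩ := hcon t t.2
    refine Set.mem_biUnion (x := (a, b)) (by simp [ha, hb]) (hg a b t ?_)
    exact ⟨_, ⟨a, rfl, x, hx, rfl⟩, b, rfl, habt⟩
  obtain ⟨⟨a, b⟩, hab, hfin⟩ := Subgroup.exists_finiteIndex_of_leftCoset_cover hcovers
  have hb : b⁻¹ ∉ Γ₀ := fun hb => hdisj.subset
    ⟨(hB.mem_toFinset.mp (Finset.mem_product.mp hab).2), inv_inv b ▸ Γ₀.inv_mem hb⟩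
  exact hfin.index_ne_zero (hqn b⁻¹ hb)
end

section
/- Every 1-cocycle δ : SL(2,ℤ) → ℤ² (satisfying δ(gh) = δ(g) + g·δ(h)) is a coboundary, i.e., there exists x ∈ ℤ² such that δ(g) = (1 − g)·x for all g ∈ SL(2,ℤ). -/
/-- Every 1-cocycle `δ : SL(2,ℤ) → ℤ²` is a coboundary. -/
theorem sl2_cocycle_is_coboundary
    (δ : Matrix.SpecialLinearGroup (Fin 2) ℤ → (Fin 2 → ℤ))
    (hδ : ∀ g h : Matrix.SpecialLinearGroup (Fin 2) ℤ,
      δ (g * h) = δ g + (g : Matrix (Fin 2) (Fin 2) ℤ).mulVec (δ h)) :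
    ∃ x : Fin 2 → ℤ, ∀ g : Matrix.SpecialLinearGroup (Fin 2) ℤ,
      δ g = x - (g : Matrix (Fin 2) (Fin 2) ℤ).mulVec x := by
  set x0 : Fin 2 → ℤ := δ (-1) with hx0
  have key : ∀ h : Matrix.SpecialLinearGroup (Fin 2) ℤ,
      (2 : ℤ) • δ h = x0 - (h : Matrix (Fin 2) (Fin 2) ℤ).mulVec x0 := by
    intro h
    have h1 := hδ (-1) h
    have h2 := hδ h (-1)
    have hcomm : (-1 : Matrix.SpecialLinearGroup (Fin 2) ℤ) * h = h * (-1) := by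
      simp [neg_mul, mul_neg]
    rw [hcomm, h2] at h1
    have hneg : ((-1 : Matrix.SpecialLinearGroup (Fin 2) ℤ) :
        Matrix (Fin 2) (Fin 2) ℤ).mulVec (δ h) = -(δ h) := by
      simp [Matrix.neg_mulVec]
    rw [hneg] at h1
    have : (2 : ℤ) • δ h = x0 - (h : Matrix (Fin 2) (Fin 2) ℤ).mulVec x0 := by
      have := h1
      funext i
      have hi := congrFun this i
      simp [Pi.add_apply, Pi.neg_apply, Pi.sub_apply] at hi ⊢
      linarith
    exact this
  -- Evaluate at the two elementary matrices to show x0 is even componentwise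
  have hT : ∃ T : Matrix.SpecialLinearGroup (Fin 2) ℤ,
      (T : Matrix (Fin 2) (Fin 2) ℤ) = !![1, 1; 0, 1] :=
    ⟨⟨!![1, 1; 0, 1], by decide⟩, rfl⟩
  have hT' : ∃ T : Matrix.SpecialLinearGroup (Fin 2) ℤ,
      (T : Matrix (Fin 2) (Fin 2) ℤ) = !![1, 0; 1, 1] :=
    ⟨⟨!![1, 0; 1, 1], by decide⟩, rfl⟩
  obtain ⟨T, hTc⟩ := hT
  obtain ⟨T', hT'c⟩ := hT'
  have even1 : 2 ∣ x0 1 := by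
    have := congrFun (key T) 0
    rw [hTc] at this
    simp [Matrix.mulVec, dotProduct, Fin.sum_univ_two] at this
    exact ⟨-(δ T 0), by linarith⟩
  have even0 : 2 ∣ x0 0 := by
    have := congrFun (key T') 1
    rw [hT'c] at this
    simp [Matrix.mulVec, dotProduct, Fin.sum_univ_two] at this
    exact ⟨-(δ T' 1), by linarith⟩
  obtain ⟨a, ha⟩ := even0
  obtain ⟨b, hb⟩ := even1
  refine ⟨![a, b], fun g => ?_⟩
  have hx : x0 = (2 : ℤ) • ![a, b] := by
    funext i
    fin_cases i <;> simp [ha, hb]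
  have hk := key g
  rw [hx] at hk
  funext i
  have hi := congrFun hk i
  have hmv : (g : Matrix (Fin 2) (Fin 2) ℤ).mulVec ((2 : ℤ) • ![a, b]) =
      (2 : ℤ) • (g : Matrix (Fin 2) (Fin 2) ℤ).mulVec ![a, b] := by
    rw [Matrix.mulVec_smul]
  rw [hmv] at hi
  simp [Pi.smul_apply, Pi.sub_apply, smul_eq_mul] at hi ⊢
  fin_cases i <;> simp at hi ⊢ <;> linarith
end

section
/- For all n ≥ 2, every 1-cocycle δ : SL(n,ℤ) → ℤⁿ (satisfying δ(gh) = δ(g) + g·δ(h)) is a coboundary: there exists y ∈ ℤⁿ with δ(g) = (1 − g)·y for all g ∈ SL(n,ℤ). In cohomological terms, H¹(SL(n,ℤ), ℤⁿ) = 0. -/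
/-!
For `n ≥ 3`, `SL(n, ℤ)` is generated by the elementary transvections `t_ij(c) = 1 + c E_ij`
(column-by-column Euclidean reduction). Evaluating the cocycle identity on pairs of commuting
transvections and on the Steinberg relation `t_il(c) t_lj(1) = t_ij(c) t_lj(1) t_il(c)` shows that
`δ(t_ij(c)) = c x_j e_i` for a vector `x` independent of `i`, i.e. `δ(t) = t x - x` on the
generators, hence everywhere.

For `n = 2` there is no third index, but `-1` is central: the cocycle identity for `g` and `-1`
gives `2 δ(g) = δ(-1) - g δ(-1)`, and evaluating at transvections shows `δ(-1)` is even.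
-/

open Matrix groupCohomology

section Cocycle

variable {G A : Type*} [Group G] [AddCommGroup A] [DistribMulAction G A] {f : G → A}

theorem groupCohomology.IsCocycle₁.smul_sub_eq_of_commute (hf : IsCocycle₁ f) {g h : G}
    (hgh : Commute g h) : g • f h - f h = h • f g - f g := by
  rw [sub_eq_sub_iff_add_eq_add, ← hf, hgh.eq, hf]

theorem groupCohomology.IsCocycle₁.isCoboundary₁_of_closure_eq_top (hf : IsCocycle₁ f)
    {s : Set G} (hs : Subgroup.closure s = ⊤) {x : A} (hx : ∀ g ∈ s, g • x - x = f g) :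
    IsCoboundary₁ f := by
  refine ⟨x, fun g => ?_⟩
  induction (hs ▸ Subgroup.mem_top g : g ∈ Subgroup.closure s)
    using Subgroup.closure_induction with
  | mem g hg => exact hx g hg
  | one => simp [map_one_of_isCocycle₁ hf]
  | mul g h _ _ hg hh => rw [hf, ← hg, ← hh, mul_smul, smul_sub]; abel
  | inv g _ hg =>
    rw [← smul_left_cancel_iff g, map_inv_of_isCocycle₁ hf, ← hg, smul_sub, smul_inv_smul]
    abel

end Cocycle

theorem Fintype.exists_ne_ne_of_three_le_card {ι : Type*} [Fintype ι]
    (h3 : 3 ≤ Fintype.card ι) (x y : ι) : ∃ z, z ≠ x ∧ z ≠ y :=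
  ENat.exists_ne_ne_of_three_le (by simpa [ENat.card_eq_coe_fintype_card] using h3) x y

namespace Matrix.SpecialLinearGroup

variable {ι R : Type*} [Fintype ι] [DecidableEq ι] [CommRing R]

theorem transvection_smul {i j : ι} (hij : i ≠ j) (c : R) (v : ι → R) :
    transvection hij c • v = v + Pi.single i (c * v j) := by
  change (1 + single i j c) *ᵥ v = _
  rw [add_mulVec, one_mulVec, single_mulVec_eq, ← Pi.single_smul', smul_eq_mul, mul_one]

theorem transvection_smul_sub {i j : ι} (hij : i ≠ j) (c : R) (v : ι → R) :
    transvection hij c • v - v = Pi.single i (c * v j) := by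
  rw [transvection_smul, add_sub_cancel_left]

theorem commute_transvection {i j p q : ι} (hij : i ≠ j) (hpq : p ≠ q) (hjp : j ≠ p)
    (hqi : q ≠ i) (c d : R) : Commute (transvection hij c) (transvection hpq d) :=
  Subtype.ext <| by
    simp [transvection_coe, mul_add, add_mul, single_mul_single_of_ne _ _ _ _ hjp,
      single_mul_single_of_ne _ _ _ _ hqi, add_comm, add_left_comm]

theorem transvection_mul_transvection_eq {i j l : ι} (hij : i ≠ j) (hil : i ≠ l)
    (hlj : l ≠ j) (c : R) : transvection hil c * transvection hlj 1 =
      transvection hij c * (transvection hlj 1 * transvection hil c) :=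
  Subtype.ext <| by
    simp only [coe_mul, transvection_coe, mul_add, add_mul, mul_one, one_mul, add_zero,
      single_mul_single_same, single_mul_single_of_ne _ _ _ _ hij.symm,
      single_mul_single_of_ne _ _ _ _ hlj.symm]
    abel

theorem smul_single_one_apply (g : SpecialLinearGroup ι R) (i j : ι) :
    (g • (Pi.single j 1 : ι → R)) i = g i j := by
  change ((g : Matrix ι ι R) *ᵥ Pi.single j 1) i = g i j
  rw [mulVec_single_one, col_apply]

def transvectionSubgroup (S : Finset ι) : Subgroup (SpecialLinearGroup ι ℤ) :=
  Subgroup.closure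
    {g | ∃ (p q : ι) (hpq : p ≠ q), q ∈ S ∧ ∃ c : ℤ, transvection hpq c = g}

theorem transvection_mem_transvectionSubgroup {S : Finset ι} {p q : ι} (hpq : p ≠ q)
    (hq : q ∈ S) (c : ℤ) : transvection hpq c ∈ transvectionSubgroup S :=
  Subgroup.subset_closure ⟨p, q, hpq, hq, c, rfl⟩

theorem transvectionSubgroup_mono {S T : Finset ι} (h : S ⊆ T) :
    transvectionSubgroup S ≤ transvectionSubgroup T :=
  Subgroup.closure_mono fun _ ⟨p, q, hpq, hq, c, hg⟩ => ⟨p, q, hpq, h hq, c, hg⟩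

def fixingBasisCompl (S : Finset ι) : Subgroup (SpecialLinearGroup ι ℤ) :=
  fixingSubgroup _ ((fun j => (Pi.single j 1 : ι → ℤ)) '' (S : Set ι)ᶜ)

theorem mem_fixingBasisCompl {S : Finset ι} {g : SpecialLinearGroup ι ℤ} :
    g ∈ fixingBasisCompl S ↔
      ∀ j ∉ S, g • (Pi.single j 1 : ι → ℤ) = Pi.single j 1 := by
  simp [fixingBasisCompl, mem_fixingSubgroup_iff]

theorem transvectionSubgroup_le_fixingBasisCompl (S : Finset ι) :
    transvectionSubgroup S ≤ fixingBasisCompl S := by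
  rw [transvectionSubgroup, Subgroup.closure_le]
  rintro _ ⟨p, q, hpq, hq, c, rfl⟩
  refine mem_fixingBasisCompl.2 fun j hj => ?_
  rw [transvection_smul, Pi.single_eq_of_ne (ne_of_mem_of_not_mem hq hj), mul_zero,
    Pi.single_zero, add_zero]

theorem isUnit_smul_single_apply_of_mem_fixingBasisCompl {S : Finset ι}
    {g : SpecialLinearGroup ι ℤ} (hg : g ∈ fixingBasisCompl S) {k p : ι} (hk : k ∈ S)
    (hzero : ∀ i ∈ S, i ≠ p → (g • (Pi.single k 1 : ι → ℤ)) i = 0) :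
    IsUnit ((g • (Pi.single k 1 : ι → ℤ)) p) := by
  -- row `k` of `g⁻¹` vanishes outside `S`, so `(g⁻¹ g) k k = 1` collapses to one product
  have hinv : ∀ t ∉ S, (g⁻¹ : SpecialLinearGroup ι ℤ) k t = 0 := fun t ht => by
    rw [← smul_single_one_apply, mem_fixingBasisCompl.1 (inv_mem hg) t ht,
      Pi.single_eq_of_ne (ne_of_mem_of_not_mem hk ht)]
  have h1 : (g⁻¹ • g • (Pi.single k 1 : ι → ℤ)) k = 1 := by
    rw [inv_smul_smul, Pi.single_eq_same]
  change ((g⁻¹ : SpecialLinearGroup ι ℤ) *ᵥ (g • (Pi.single k 1 : ι → ℤ))) k = 1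
    at h1
  rw [mulVec, dotProduct, Finset.sum_eq_single p] at h1
  · exact IsUnit.of_mul_eq_one_right _ h1
  · intro t _ htp
    by_cases ht : t ∈ S
    · rw [hzero t ht htp, mul_zero]
    · rw [hinv t ht, zero_mul]
  · simp

theorem smul_single_apply_self_of_mem_fixingBasisCompl_singleton {k : ι}
    {g : SpecialLinearGroup ι ℤ} (hg : g ∈ fixingBasisCompl {k}) :
    (g • (Pi.single k 1 : ι → ℤ)) k = 1 := by
  -- `g` agrees with `1` outside column `k`, so `det g = g k k`
  have hcol : (g : Matrix ι ι ℤ) =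
      (1 : Matrix ι ι ℤ).updateCol k fun r => ∑ i, g i k • (1 : Matrix ι ι ℤ) r i := by
    ext r j
    rcases eq_or_ne j k with rfl | hjk
    · simp [one_apply]
    · rw [updateCol_ne hjk, ← smul_single_one_apply,
        mem_fixingBasisCompl.1 hg j (by simpa using hjk)]
      simp [one_apply, Pi.single_apply]
  have hdet := g.det_coe
  rw [hcol, det_updateCol_sum, det_one] at hdet
  rw [smul_single_one_apply]
  simpa using hdet

def TransvectionReachable (S : Finset ι) (v w : ι → ℤ) : Prop :=
  ∃ e ∈ transvectionSubgroup S, e • v = w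

namespace TransvectionReachable

variable {S : Finset ι} {u v w : ι → ℤ}

theorem refl (S : Finset ι) (v : ι → ℤ) : TransvectionReachable S v v :=
  ⟨1, one_mem _, one_smul _ v⟩

theorem trans (huv : TransvectionReachable S u v) (hvw : TransvectionReachable S v w) :
    TransvectionReachable S u w := by
  obtain ⟨e₁, he₁, rfl⟩ := huv
  obtain ⟨e₂, he₂, rfl⟩ := hvw
  exact ⟨e₂ * e₁, mul_mem he₂ he₁, mul_smul e₂ e₁ u⟩

theorem transvection_smul {p q : ι} (hpq : p ≠ q) (hq : q ∈ S) (c : ℤ) (v : ι → ℤ) :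
    TransvectionReachable S v (transvection hpq c • v) :=
  ⟨_, transvection_mem_transvectionSubgroup hpq hq c, rfl⟩

theorem exists_eq_zero_off (hS : S.Nonempty) (v : ι → ℤ) :
    ∃ w p, TransvectionReachable S v w ∧ p ∈ S ∧ ∀ i ∈ S, i ≠ p → w i = 0 := by
  -- Euclid: reducing a larger entry on `S` modulo a smaller nonzero one lowers `∑ |v i|`
  induction hμ : ∑ i ∈ S, (v i).natAbs using Nat.strong_induction_on generalizing v with
  | _ N ih =>
  by_cases hred : ∃ p ∈ S, ∃ q ∈ S, p ≠ q ∧ v p ≠ 0 ∧ (v p).natAbs ≤ (v q).natAbs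
  · obtain ⟨p, hp, q, hq, hpq, hp0, hle⟩ := hred
    have hw : ∀ i, (transvection hpq.symm (-(v q / v p)) • v) i =
        if i = q then v q % v p else v i := fun i => by
      rw [SpecialLinearGroup.transvection_smul, Pi.add_apply, Pi.single_apply, Int.emod_def]
      split_ifs with hiq
      · subst hiq; ring
      · rw [add_zero]
    have hmod : (v q % v p).natAbs < (v q).natAbs := by
      have := Int.emod_lt (v q) hp0
      have := Int.emod_nonneg (v q) hp0
      omega
    have hlt : ∑ i ∈ S, ((transvection hpq.symm (-(v q / v p)) • v) i).natAbs < N := by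
      rw [← hμ]
      refine Finset.sum_lt_sum (fun i _ => ?_) ⟨q, hq, by rwa [hw, if_pos rfl]⟩
      rw [hw]
      split_ifs with hiq
      · exact hiq ▸ hmod.le
      · exact le_rfl
    obtain ⟨w, r, hw', hr, hzero⟩ := ih _ hlt _ rfl
    exact ⟨w, r, (transvection_smul hpq.symm hp _ v).trans hw', hr, hzero⟩
  · push Not at hred
    by_cases hv : ∃ p ∈ S, v p ≠ 0
    · obtain ⟨p, hp, hp0⟩ := hv
      refine ⟨v, p, refl S v, hp, fun i hi hip => ?_⟩
      by_contra hi0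
      have := hred p hp i hi hip.symm hp0
      have := hred i hi p hp hip hi0
      omega
    · push Not at hv
      obtain ⟨p, hp⟩ := hS
      exact ⟨v, p, refl S v, hp, fun i hi _ => hv i hi⟩

theorem exists_apply_eq_one_of_isUnit {k r : ι} (hr : r ∈ S) (hrk : r ≠ k)
    (hu : IsUnit (v r)) : ∃ w, TransvectionReachable S v w ∧ w k = 1 := by
  refine ⟨_, transvection_smul hrk.symm hr (v r * (1 - v k)) v, ?_⟩
  rw [SpecialLinearGroup.transvection_smul, Pi.add_apply, Pi.single_eq_same]
  linear_combination (1 - v k) * Int.isUnit_mul_self hu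

theorem single_of_apply_eq_one {k : ι} (hk : k ∈ S) (hvk : v k = 1) :
    TransvectionReachable S v (Pi.single k 1) := by
  suffices ∀ T : Finset ι, k ∉ T →
      ∃ w, TransvectionReachable S v w ∧ w k = 1 ∧ ∀ i ∈ T, w i = 0 by
    obtain ⟨w, hvw, hwk, hw⟩ := this (Finset.univ.erase k) (Finset.notMem_erase k _)
    convert hvw
    ext i
    rcases eq_or_ne i k with rfl | hik
    · rw [hwk, Pi.single_eq_same]
    · rw [hw i (Finset.mem_erase.2 ⟨hik, Finset.mem_univ i⟩), Pi.single_eq_of_ne hik]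
  intro T
  induction T using Finset.induction_on with
  | empty => exact fun _ => ⟨v, refl S v, hvk, by simp⟩
  | insert i T hiT ih =>
    intro hkT
    obtain ⟨w, hvw, hwk, hw⟩ := ih (fun h => hkT (Finset.mem_insert_of_mem h))
    have hik : i ≠ k := fun h => hkT (h ▸ Finset.mem_insert_self i T)
    refine ⟨_, hvw.trans (transvection_smul hik hk (-w i) w), ?_, ?_⟩
    · rw [SpecialLinearGroup.transvection_smul, Pi.add_apply, Pi.single_eq_of_ne hik.symm, hwk,
        add_zero]
    · intro m hm
      rw [SpecialLinearGroup.transvection_smul, Pi.add_apply, hwk, Pi.single_apply]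
      rcases Finset.mem_insert.1 hm with rfl | hmT
      · simp
      · rw [if_neg (ne_of_mem_of_not_mem hmT hiT), hw m hmT, add_zero]

end TransvectionReachable

theorem exists_transvectionReachable_smul_single_apply_eq_one {S : Finset ι} {k : ι}
    (hk : k ∈ S) {g : SpecialLinearGroup ι ℤ} (hg : g ∈ fixingBasisCompl S) :
    ∃ w, TransvectionReachable S (g • (Pi.single k 1 : ι → ℤ)) w ∧ w k = 1 := by
  by_cases hS : ∀ r ∈ S, r = k
  · obtain rfl : S = {k} := Finset.eq_singleton_iff_unique_mem.2 ⟨hk, hS⟩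
    exact ⟨_, .refl _ _, smul_single_apply_self_of_mem_fixingBasisCompl_singleton hg⟩
  push Not at hS
  obtain ⟨r, hr, hrk⟩ := hS
  obtain ⟨_, p, ⟨e, he, rfl⟩, hp, hzero⟩ :=
    TransvectionReachable.exists_eq_zero_off ⟨k, hk⟩ (g • (Pi.single k 1 : ι → ℤ))
  rw [← mul_smul] at hzero
  have hunit := isUnit_smul_single_apply_of_mem_fixingBasisCompl
    (mul_mem (transvectionSubgroup_le_fixingBasisCompl S he) hg) hk hzero
  have hreach :
      TransvectionReachable S (g • (Pi.single k 1 : ι → ℤ)) ((e * g) • Pi.single k 1) :=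
    ⟨e, he, (mul_smul e g _).symm⟩
  rcases eq_or_ne p k with rfl | hpk
  · -- the unit sits at `k` itself: copy it to `r` first
    obtain ⟨w, hw, hwk⟩ := TransvectionReachable.exists_apply_eq_one_of_isUnit hr hrk
      (v := transvection hrk (1 : ℤ) • (e * g) • (Pi.single p 1 : ι → ℤ))
      (by rwa [transvection_smul, Pi.add_apply, Pi.single_eq_same, hzero r hr hrk, one_mul,
        zero_add])
    exact ⟨w, hreach.trans ((TransvectionReachable.transvection_smul hrk hp 1 _).trans hw), hwk⟩
  · obtain ⟨w, hw, hwk⟩ := TransvectionReachable.exists_apply_eq_one_of_isUnit hp hpk hunit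
    exact ⟨w, hreach.trans hw, hwk⟩

theorem exists_mem_transvectionSubgroup_mul_smul_single {S : Finset ι} {k : ι} (hk : k ∈ S)
    {g : SpecialLinearGroup ι ℤ} (hg : g ∈ fixingBasisCompl S) :
    ∃ e ∈ transvectionSubgroup S, (e * g) • (Pi.single k 1 : ι → ℤ) = Pi.single k 1 := by
  obtain ⟨w, hw, hwk⟩ := exists_transvectionReachable_smul_single_apply_eq_one hk hg
  obtain ⟨e, he, heq⟩ := hw.trans (.single_of_apply_eq_one hk hwk)
  exact ⟨e, he, by rw [mul_smul, heq]⟩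

theorem mem_transvectionSubgroup_of_mem_fixingBasisCompl (S : Finset ι)
    {g : SpecialLinearGroup ι ℤ} (hg : g ∈ fixingBasisCompl S) :
    g ∈ transvectionSubgroup S := by
  induction S using Finset.induction_on generalizing g with
  | empty =>
    obtain rfl : g = 1 := Subtype.ext <| Matrix.ext fun i j => by
      rw [← smul_single_one_apply, mem_fixingBasisCompl.1 hg j (Finset.notMem_empty j)]
      simp [one_apply, Pi.single_apply]
    exact one_mem _
  | insert k S hkS ih =>
    obtain ⟨e, he, hek⟩ := exists_mem_transvectionSubgroup_mul_smul_single
      (Finset.mem_insert_self k S) hg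
    have heg : e * g ∈ fixingBasisCompl S := mem_fixingBasisCompl.2 fun j hj => by
      rcases eq_or_ne j k with rfl | hjk
      · exact hek
      · exact mem_fixingBasisCompl.1 (mul_mem (transvectionSubgroup_le_fixingBasisCompl _ he) hg)
          j (by simp [hj, hjk])
    simpa using mul_mem (inv_mem he)
      (transvectionSubgroup_mono (Finset.subset_insert k S) (ih heg))

theorem closure_transvections_eq_top :
    Subgroup.closure {g : SpecialLinearGroup ι ℤ |
      ∃ (i j : ι) (hij : i ≠ j) (c : ℤ), transvection hij c = g} = ⊤ := by
  refine eq_top_iff.2 fun g _ => ?_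
  refine Subgroup.closure_mono ?_ (mem_transvectionSubgroup_of_mem_fixingBasisCompl Finset.univ
    (mem_fixingBasisCompl.2 fun j hj => absurd (Finset.mem_univ j) hj))
  rintro _ ⟨i, j, hij, -, c, rfl⟩
  exact ⟨i, j, hij, c, rfl⟩

end Matrix.SpecialLinearGroup

namespace groupCohomology.IsCocycle₁

open Matrix.SpecialLinearGroup

variable {ι : Type*} [Fintype ι] [DecidableEq ι] {f : SpecialLinearGroup ι ℤ → ι → ℤ}

theorem transvection_apply_eq_mul (hf : IsCocycle₁ f) {i j l : ι} (hij : i ≠ j) (hil : i ≠ l)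
    (c : ℤ) : f (transvection hij c) l = c * f (transvection hil 1) j := by
  have h := congrFun (hf.smul_sub_eq_of_commute
    (commute_transvection hij hil hij.symm hil.symm c 1)) i
  simp only [transvection_smul_sub, Pi.single_eq_same] at h
  linarith

theorem transvection_eq_single_sub_single (hf : IsCocycle₁ f) {i j l : ι} (hij : i ≠ j)
    (hil : i ≠ l) (hlj : l ≠ j) (c : ℤ) :
    f (transvection hij c) = Pi.single i (c * (f (transvection hlj 1) l
      - f (transvection hil c) j - f (transvection hlj 1) j))
      - Pi.single l (f (transvection hil c) j) := by
  have h := congrArg f (transvection_mul_transvection_eq hij hil hlj c)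
  rw [hf, hf, hf] at h
  ext m
  have hm := congrFun h m
  simp only [transvection_smul, Pi.add_apply, Pi.sub_apply, Pi.single_apply] at hm ⊢
  rcases eq_or_ne m i with rfl | hmi
  · simp only [if_true, if_neg hil, if_neg hlj.symm, add_zero, sub_zero] at hm ⊢
    linarith
  rcases eq_or_ne m l with rfl | hml
  · simp only [if_true, if_neg hmi, add_zero, zero_sub] at hm ⊢
    linarith
  · simp only [if_neg hmi, if_neg hml, add_zero, sub_self] at hm ⊢
    linarith

theorem transvection_apply_of_ne (hf : IsCocycle₁ f) (h3 : 3 ≤ Fintype.card ι) {i j m : ι}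
    (hij : i ≠ j) (hmi : m ≠ i) (c : ℤ) : f (transvection hij c) m = 0 := by
  rcases eq_or_ne m j with rfl | hmj
  · obtain ⟨l, hli, hlm⟩ := Fintype.exists_ne_ne_of_three_le_card h3 i m
    simpa [hmi, hlm.symm] using congrFun (hf.transvection_eq_single_sub_single hij hli.symm hlm c) m
  · -- `f (t_im 1) j` is symmetric in `j, m` by commutation and antisymmetric by Steinberg
    have hsymm := hf.transvection_apply_eq_mul hmi.symm hij 1
    have hanti := congrFun (hf.transvection_eq_single_sub_single hij hmi.symm hmj 1) m
    simp only [Pi.sub_apply, Pi.single_eq_same, Pi.single_eq_of_ne hmi] at hanti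
    have : f (transvection hmi.symm 1) j = 0 := by linarith
    rw [hf.transvection_apply_eq_mul hij hmi.symm c, this, mul_zero]

theorem transvection_apply_self (hf : IsCocycle₁ f) (h3 : 3 ≤ Fintype.card ι) {i i' j : ι}
    (hij : i ≠ j) (hi'j : i' ≠ j) (c : ℤ) :
    f (transvection hij c) i = c * f (transvection hi'j 1) i' := by
  have key : ∀ {i l} (hij : i ≠ j) (hil : i ≠ l) (hlj : l ≠ j) (c : ℤ),
      f (transvection hij c) i = c * f (transvection hlj 1) l := by
    intro i l hij hil hlj c
    simpa [hil, hf.transvection_apply_of_ne h3 hil hij.symm,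
      hf.transvection_apply_of_ne h3 hlj hlj.symm] using
      congrFun (hf.transvection_eq_single_sub_single hij hil hlj c) i
  rcases eq_or_ne i i' with rfl | hii'
  · obtain ⟨l, hli, hlj⟩ := Fintype.exists_ne_ne_of_three_le_card h3 i j
    rw [key hij hli.symm hlj, key hi'j hli.symm hlj, one_mul]
  · exact key hij hii' hi'j c

theorem isCoboundary₁_of_three_le_card (hf : IsCocycle₁ f) (h3 : 3 ≤ Fintype.card ι) :
    IsCoboundary₁ f := by
  choose p hp using fun j : ι => (Fintype.exists_ne_ne_of_three_le_card h3 j j).imp fun _ h => h.1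
  refine hf.isCoboundary₁_of_closure_eq_top closure_transvections_eq_top
    (x := fun j => f (transvection (hp j) 1) (p j)) ?_
  rintro _ ⟨i, j, hij, c, rfl⟩
  ext m
  rw [transvection_smul_sub]
  rcases eq_or_ne m i with rfl | hmi
  · simp [hf.transvection_apply_self h3 hij (hp j)]
  · simp [hmi, hf.transvection_apply_of_ne h3 hij hmi]

theorem isCoboundary₁_of_even_card [Nontrivial ι] (hf : IsCocycle₁ f)
    (hι : Even (Fintype.card ι)) : IsCoboundary₁ f := by
  have : Fact (Even (Fintype.card ι)) := ⟨hι⟩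
  have hneg : ∀ v : ι → ℤ, (-1 : SpecialLinearGroup ι ℤ) • v = -v := fun v => by
    change (-(1 : Matrix ι ι ℤ)) *ᵥ v = -v
    rw [neg_mulVec, one_mulVec]
  have key : ∀ g, g • f (-1) - f (-1) = -f g - f g := fun g => by
    rw [hf.smul_sub_eq_of_commute (Commute.neg_one_right g), hneg]
  choose p hp using fun j : ι => exists_ne j
  set x : ι → ℤ := fun j => f (transvection (hp j) 1) (p j)
  have hx : f (-1) = -(2 : ℤ) • x := funext fun j => by
    have := congrFun (key (transvection (hp j) 1)) (p j)
    rw [transvection_smul_sub] at this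
    simp only [one_mul, Pi.single_eq_same, Pi.sub_apply, Pi.neg_apply, Pi.smul_apply,
      smul_eq_mul, x] at this ⊢
    linarith
  refine ⟨x, fun g => smul_right_injective (ι → ℤ) (two_ne_zero' ℤ) ?_⟩
  have h := key g
  rw [hx, smul_comm g] at h
  generalize g • x = y at h ⊢
  linear_combination (norm := module) -h

end groupCohomology.IsCocycle₁

/-- For `n ≥ 2`, every 1-cocycle `δ : SL(n,ℤ) → ℤⁿ` is a coboundary:
`H¹(SL(n,ℤ), ℤⁿ) = 0`. -/
theorem sln_cocycle_is_coboundary {n : ℕ} (hn : 2 ≤ n)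
    (δ : Matrix.SpecialLinearGroup (Fin n) ℤ → (Fin n → ℤ))
    (hδ : ∀ g h : Matrix.SpecialLinearGroup (Fin n) ℤ,
      δ (g * h) = δ g + (g : Matrix (Fin n) (Fin n) ℤ).mulVec (δ h)) :
    ∃ y : Fin n → ℤ, ∀ g : Matrix.SpecialLinearGroup (Fin n) ℤ,
      δ g = y - (g : Matrix (Fin n) (Fin n) ℤ).mulVec y := by
  have hf : IsCocycle₁ δ := fun g h => (hδ g h).trans (add_comm _ _)
  obtain ⟨x, hx⟩ : IsCoboundary₁ δ := by
    obtain rfl | h3 : n = 2 ∨ 3 ≤ n := by omega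
    · exact hf.isCoboundary₁_of_even_card (by decide)
    · exact hf.isCoboundary₁_of_three_le_card (by simpa using h3)
  refine ⟨-x, fun g => ?_⟩
  rw [← hx g, mulVec_neg, sub_neg_eq_add, neg_add_eq_sub]
  rfl
end

section
/- For all n ≥ 2, every 1-cocycle δ : GL(n,ℤ) → ℤⁿ is a coboundary. In particular, if δ vanishes on SL(n,ℤ) and T ∈ GL(n,ℤ) has determinant −1, then δ(T) = 0. -/
/-!
The central element `-1` acts by `-1` on the coefficients, so comparing the cocycle identity for
`g * (-1)` and `(-1) * g` gives `2 • δ g = δ (-1) - g • δ (-1)`. Evaluated at an elementary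
transvection this shows that `δ (-1)` is divisible by `2`, and then `δ` is the coboundary of
`δ (-1) / 2`. If `δ` vanishes on `SL(n, ℤ)`, that vector is fixed by every elementary transvection,
hence zero, so `δ` vanishes everywhere.
-/

open Matrix groupCohomology

namespace groupCohomology

section

variable {G A : Type*} [Mul G] [AddCommGroup A] [SMul G A]

theorem two_nsmul_map_of_isCocycle₁ {f : G → A} (hf : IsCocycle₁ f) {z : G}
    (hz : ∀ g, Commute z g) (hneg : ∀ a : A, z • a = -a) (g : G) :
    2 • f g = f z - g • f z := by
  have hzg := hf z g
  rw [(hz g).eq, hf g z, hneg] at hzg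
  rw [two_nsmul, eq_sub_iff_add_eq]
  linear_combination (norm := abel) hzg

end

theorem isCoboundary₁_of_isCocycle₁_of_eq_two_nsmul {G A : Type*} [Monoid G] [AddCommGroup A]
    [IsAddTorsionFree A] [DistribMulAction G A] {f : G → A} (hf : IsCocycle₁ f) {z : G}
    (hz : ∀ g, Commute z g) (hneg : ∀ a : A, z • a = -a) {x : A} (hx : f z = 2 • x) :
    IsCoboundary₁ f := by
  refine ⟨-x, fun g => ?_⟩
  rw [← nsmul_right_inj two_ne_zero, two_nsmul_map_of_isCocycle₁ hf hz hneg, hx, smul_comm]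
  rw [smul_neg, nsmul_sub]
  abel

end groupCohomology

namespace Matrix

variable {ι R : Type*} [Fintype ι] [DecidableEq ι] [CommRing R]

theorem transvection_mulVec_apply_self (i j : ι) (c : R) (v : ι → R) :
    (transvection i j c *ᵥ v) i = v i + c * v j := by
  simp [transvection, add_mulVec, single_mulVec]

theorem eq_zero_of_forall_transvection_mulVec_eq [Nontrivial ι] {v : ι → R}
    (hv : ∀ i j : ι, i ≠ j → transvection i j 1 *ᵥ v = v) : v = 0 := by
  funext j
  obtain ⟨i, hij⟩ := exists_ne j
  have hi := congrFun (hv i j hij) i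
  rw [transvection_mulVec_apply_self] at hi
  simpa using hi

namespace GeneralLinearGroup

theorem neg_one_smul (v : ι → R) : (-1 : GL ι R) • v = -v := by
  simp [Units.smul_def]

variable [Nontrivial ι] {f : GL ι R → ι → R}

theorem exists_map_neg_one_eq_two_nsmul (hf : IsCocycle₁ f) : ∃ x, f (-1) = 2 • x := by
  choose i hij using fun j : ι => exists_ne j
  refine ⟨fun j => -f (SpecialLinearGroup.transvection (hij j) (1 : R)) (i j), funext fun j => ?_⟩
  set t : GL ι R := SpecialLinearGroup.toGL (SpecialLinearGroup.transvection (hij j) (1 : R))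
  have ht : (t : Matrix ι ι R) = transvection (i j) j 1 := rfl
  have h := congrFun (two_nsmul_map_of_isCocycle₁ hf Commute.neg_one_left neg_one_smul t) (i j)
  rw [Pi.sub_apply, Units.smul_def, ht, smul_eq_mulVec, transvection_mulVec_apply_self] at h
  simp only [Pi.smul_apply, nsmul_eq_mul, Nat.cast_ofNat] at h ⊢
  linear_combination h

theorem isCoboundary₁_of_isCocycle₁ [IsAddTorsionFree R] (hf : IsCocycle₁ f) :
    IsCoboundary₁ f :=
  have ⟨_, hx⟩ := exists_map_neg_one_eq_two_nsmul hf
  isCoboundary₁_of_isCocycle₁_of_eq_two_nsmul hf Commute.neg_one_left neg_one_smul hx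

theorem map_eq_zero_of_isCocycle₁_of_forall_det_eq_one [IsAddTorsionFree R] (hf : IsCocycle₁ f)
    (hSL : ∀ g : GL ι R, (g : Matrix ι ι R).det = 1 → f g = 0) (g : GL ι R) : f g = 0 := by
  obtain ⟨x, hx⟩ := isCoboundary₁_of_isCocycle₁ hf
  have hx0 : x = 0 := eq_zero_of_forall_transvection_mulVec_eq fun i j hij =>
    sub_eq_zero.mp <| (hx (SpecialLinearGroup.transvection hij (1 : R))).trans <|
      hSL _ (det_transvection_of_ne i j hij 1)
  simpa [hx0] using (hx g).symm

end GeneralLinearGroup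

end Matrix

/-- For `n ≥ 2`, every 1-cocycle `δ : GL(n,ℤ) → ℤⁿ` is a coboundary.
In particular, if `δ` vanishes on `SL(n,ℤ)` and `T` has determinant `-1`,
then `δ T = 0`. -/
theorem gln_cocycle_is_coboundary {n : ℕ} (hn : 2 ≤ n)
    (δ : GL (Fin n) ℤ → (Fin n → ℤ))
    (hδ : ∀ g h : GL (Fin n) ℤ,
      δ (g * h) = δ g + (g : Matrix (Fin n) (Fin n) ℤ).mulVec (δ h)) :
    (∃ y : Fin n → ℤ, ∀ g : GL (Fin n) ℤ,
      δ g = y - (g : Matrix (Fin n) (Fin n) ℤ).mulVec y) ∧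
    ((∀ g : GL (Fin n) ℤ, (g : Matrix (Fin n) (Fin n) ℤ).det = 1 → δ g = 0) →
      ∀ T : GL (Fin n) ℤ, (T : Matrix (Fin n) (Fin n) ℤ).det = -1 → δ T = 0) := by
  have hcocycle : IsCocycle₁ δ := fun g h => (hδ g h).trans (add_comm _ _)
  have : Nontrivial (Fin n) := Fin.nontrivial_iff_two_le.mpr hn
  obtain ⟨x, hx⟩ := GeneralLinearGroup.isCoboundary₁_of_isCocycle₁ hcocycle
  refine ⟨⟨-x, fun g => ?_⟩, fun hSL T _ =>
    GeneralLinearGroup.map_eq_zero_of_isCocycle₁_of_forall_det_eq_one hcocycle hSL T⟩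
  rw [← hx g, Units.smul_def, smul_eq_mulVec, mulVec_neg]
  abel
end

section
/- The group G = ℤⁿ ⋊ GL(n,ℤ) (with GL(n,ℤ) acting by matrix multiplication on ℤⁿ) is an ICC group for every n ≥ 2: every nontrivial element has an infinite conjugacy class. -/
/-! Write `x = (v, g)`. If `g ≠ 1`, pick `u` with `g u ≠ u`: conjugating by the translations
by `t u` turns the translation part into `v + t (u - g u)`. If `g = 1` then `v ≠ 0`, say `v i ≠ 0`;
choosing `j ≠ i` (this is where `n ≥ 2` enters), conjugating by the transvections
`1 + t E_{ji} ∈ GL(n,ℤ)` gives the translations by `v + t v_i e_j`. Either way the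
conjugates are injectively indexed by `t ∈ ℤ`. -/

/-- The action of `GL(n,ℤ)` on `ℤⁿ` (written multiplicatively) by matrix
multiplication, as a homomorphism to the automorphism group. -/
def glAction (n : ℕ) : GL (Fin n) ℤ →* MulAut (Multiplicative (Fin n → ℤ)) where
  toFun g :=
    { toFun := fun v => Multiplicative.ofAdd
        ((g : Matrix (Fin n) (Fin n) ℤ).mulVec v.toAdd)
      invFun := fun v => Multiplicative.ofAdd
        (((g⁻¹ : GL (Fin n) ℤ) : Matrix (Fin n) (Fin n) ℤ).mulVec v.toAdd)
      left_inv := by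
        intro v
        simp [Matrix.mulVec_mulVec, ← Units.val_mul]
      right_inv := by
        intro v
        simp [Matrix.mulVec_mulVec, ← Units.val_mul]
      map_mul' := by
        intro v w
        simp [Matrix.mulVec_add, ofAdd_add] }
  map_one' := by
    ext v
    simp
  map_mul' := by
    intro g h
    refine MulEquiv.ext fun v => ?_
    show Multiplicative.ofAdd
        ((((g * h : GL (Fin n) ℤ)) : Matrix (Fin n) (Fin n) ℤ).mulVec
          (Multiplicative.toAdd v)) =
      Multiplicative.ofAdd
        (((g : GL (Fin n) ℤ) : Matrix (Fin n) (Fin n) ℤ).mulVec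
          (((h : GL (Fin n) ℤ) : Matrix (Fin n) (Fin n) ℤ).mulVec
            (Multiplicative.toAdd v)))
    rw [Units.val_mul, ← Matrix.mulVec_mulVec]

open Matrix SemidirectProduct

namespace SemidirectProduct

variable {N G : Type*} [Group N] [Group G] {φ : G →* MulAut N}

theorem inl_mul_mul_inl_inv (m : N) (x : N ⋊[φ] G) :
    inl m * x * (inl m)⁻¹ = ⟨m * x.left * φ x.right m⁻¹, x.right⟩ := by
  ext <;> simp

theorem inr_mul_inl_mul_inr_inv (g : G) (m : N) :
    inr g * inl m * (inr g)⁻¹ = (inl (φ g m) : N ⋊[φ] G) := by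
  rw [inl_aut, map_inv]

end SemidirectProduct

theorem Set.infinite_range_conj_of_injective {G ι : Type*} [Group G] [Infinite ι] (x : G)
    {f : ι → G} (hf : Function.Injective fun i => f i * x * (f i)⁻¹) :
    (Set.range fun h : G => h * x * h⁻¹).Infinite :=
  Set.infinite_of_injective_forall_mem hf fun i => ⟨f i, rfl⟩

theorem injective_add_zsmul {M : Type*} [AddCommGroup M] [IsAddTorsionFree M] (v : M)
    {d : M} (hd : d ≠ 0) : Function.Injective fun t : ℤ => v + t • d :=
  (add_right_injective v).comp (smul_left_injective ℤ hd)

namespace Matrix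

variable {ι R : Type*} [Fintype ι] [DecidableEq ι]

theorem exists_mulVec_ne_self [NonAssocSemiring R] {M : Matrix ι ι R} (hM : M ≠ 1) :
    ∃ u, M *ᵥ u ≠ u := by
  simpa [ext_iff_mulVec] using hM

variable [CommRing R]

theorem transvection_mulVec (i j : ι) (c : R) (v : ι → R) :
    transvection i j c *ᵥ v = v + c • Pi.single i (v j) := by
  rw [transvection, add_mulVec, one_mulVec, single_mulVec, ← Pi.single_smul]
  rfl

noncomputable def transvectionGL {i j : ι} (hij : i ≠ j) (c : R) : GL ι R :=
  GeneralLinearGroup.mk'' (transvection i j c) <| by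
    rw [det_transvection_of_ne i j hij]
    exact isUnit_one

@[simp]
theorem val_transvectionGL {i j : ι} (hij : i ≠ j) (c : R) :
    (transvectionGL hij c : Matrix ι ι R) = transvection i j c := rfl

end Matrix

abbrev IntAffineGroup (n : ℕ) := Multiplicative (Fin n → ℤ) ⋊[glAction n] GL (Fin n) ℤ

namespace IntAffineGroup

variable {n : ℕ}

theorem glAction_apply (g : GL (Fin n) ℤ) (a : Multiplicative (Fin n → ℤ)) :
    glAction n g a = Multiplicative.ofAdd ((g : Matrix (Fin n) (Fin n) ℤ) *ᵥ a.toAdd) := rfl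

theorem conj_translation (w : Fin n → ℤ) (x : IntAffineGroup n) :
    inl (.ofAdd w) * x * (inl (.ofAdd w))⁻¹ =
      ⟨.ofAdd (x.left.toAdd + (w - (x.right : Matrix (Fin n) (Fin n) ℤ) *ᵥ w)), x.right⟩ := by
  rw [inl_mul_mul_inl_inv, glAction_apply]
  congr 1
  simp [mulVec_neg, sub_eq_add_neg, add_left_comm, mul_assoc]

theorem conj_linear (k : GL (Fin n) ℤ) (v : Fin n → ℤ) :
    inr k * inl (.ofAdd v) * (inr k)⁻¹ =
      (inl (.ofAdd ((k : Matrix (Fin n) (Fin n) ℤ) *ᵥ v)) : IntAffineGroup n) := by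
  rw [inr_mul_inl_mul_inr_inv, glAction_apply]
  rfl

theorem infinite_conj_of_right_ne_one {x : IntAffineGroup n} (hx : x.right ≠ 1) :
    (Set.range fun h : IntAffineGroup n => h * x * h⁻¹).Infinite := by
  obtain ⟨u, hu⟩ := exists_mulVec_ne_self fun h => hx (Units.ext h)
  refine Set.infinite_range_conj_of_injective x (f := fun t : ℤ => inl (.ofAdd (t • u))) ?_
  have hd : u - (x.right : Matrix (Fin n) (Fin n) ℤ) *ᵥ u ≠ 0 := sub_ne_zero.mpr hu.symm
  intro s t hst
  simp only [conj_translation, mulVec_smul, ← smul_sub] at hst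
  exact injective_add_zsmul _ hd (Multiplicative.ofAdd.injective (congrArg left hst))

theorem infinite_conj_inl (hn : 2 ≤ n) {v : Fin n → ℤ} (hv : v ≠ 0) :
    (Set.range fun h : IntAffineGroup n => h * inl (.ofAdd v) * h⁻¹).Infinite := by
  obtain ⟨i, hi⟩ := Function.ne_iff.mp hv
  have : Nontrivial (Fin n) := Fin.nontrivial_iff_two_le.mpr hn
  obtain ⟨j, hji⟩ := exists_ne i
  refine Set.infinite_range_conj_of_injective _ (f := fun t : ℤ => inr (transvectionGL hji t)) ?_
  have hd : (Pi.single j (v i) : Fin n → ℤ) ≠ 0 := by simpa using hi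
  intro s t hst
  simp only [conj_linear, val_transvectionGL, transvection_mulVec] at hst
  exact injective_add_zsmul _ hd (Multiplicative.ofAdd.injective (inl_injective hst))

end IntAffineGroup

/-- `ℤⁿ ⋊ GL(n,ℤ)` is an ICC group for `n ≥ 2`: every non-identity element
has an infinite conjugacy class. -/
theorem icc_semidirect {n : ℕ} (hn : 2 ≤ n)
    (x : Multiplicative (Fin n → ℤ) ⋊[glAction n] GL (Fin n) ℤ) (hx : x ≠ 1) :
    (Set.range fun h : Multiplicative (Fin n → ℤ) ⋊[glAction n] GL (Fin n) ℤ =>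
      h * x * h⁻¹).Infinite := by
  obtain ⟨m, g⟩ := x
  rcases eq_or_ne g 1 with rfl | hg
  · have hm : m.toAdd ≠ 0 := fun h => hx (by ext <;> simp [h])
    exact IntAffineGroup.infinite_conj_inl hn hm
  · exact IntAffineGroup.infinite_conj_of_right_ne_one hg
end

section
/- Let n ≥ 2 and let α be an automorphism of G = ℤⁿ ⋊ GL(n,ℤ). Then α(ℤⁿ) = ℤⁿ, where ℤⁿ is identified with the normal subgroup {(x,1) : x ∈ ℤⁿ}. -/
/-!
`ℤⁿ` is the largest abelian normal subgroup of `ℤⁿ ⋊ GL(n,ℤ)`, hence characteristic. Let `M` be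
abelian and normal, `m ∈ M` with linear part `g`, and `K = M ∩ ℤⁿ`. Then `K` is `GL(n,ℤ)`-invariant,
contains the commutators `x - g x` of `m` with `ℤⁿ`, and is fixed pointwise by `g` since `M` is
abelian. Transvections show that an invariant subgroup containing `w` contains `w j • x` for all
`x`; applied to `w = x - g x`, the fixed point `w j • x` gives `w j • w = 0`, so `w j = 0`.
-/

open SemidirectProduct Matrix
open scoped commutatorElement

section TransvectionInvariant

variable {ι R : Type*} [Fintype ι] [DecidableEq ι] [CommRing R] {K : AddSubgroup (ι → R)}

theorem AddSubgroup.single_mul_mem_of_forall_mulVec_mem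
    (hK : ∀ g : GL ι R, ∀ w ∈ K, (g : Matrix ι ι R) *ᵥ w ∈ K) {w : ι → R} (hw : w ∈ K)
    {i j : ι} (hij : i ≠ j) (c : R) : Pi.single i (c * w j) ∈ K := by
  have ht := hK (SpecialLinearGroup.transvection hij c) w hw
  have hdiff :
      (SpecialLinearGroup.transvection hij c : GL ι R) *ᵥ w - w = Pi.single i (c * w j) := by
    rw [SpecialLinearGroup.coe_GL_coe_matrix, SpecialLinearGroup.transvection_coe, add_mulVec,
      one_mulVec, single_mulVec, add_sub_cancel_left]
    rfl
  exact hdiff ▸ K.sub_mem ht hw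

theorem AddSubgroup.smul_mem_of_forall_mulVec_mem [Nontrivial ι]
    (hK : ∀ g : GL ι R, ∀ w ∈ K, (g : Matrix ι ι R) *ᵥ w ∈ K) {w : ι → R} (hw : w ∈ K)
    (j : ι) (x : ι → R) : w j • x ∈ K := by
  have hsingle : ∀ i c, Pi.single i (c * w j) ∈ K := by
    intro i c
    by_cases hij : i = j
    · obtain ⟨k, hkj⟩ := exists_ne j
      subst hij
      simpa using single_mul_mem_of_forall_mulVec_mem hK
        (single_mul_mem_of_forall_mulVec_mem hK hw hkj 1) hkj.symm c
    · exact single_mul_mem_of_forall_mulVec_mem hK hw hij c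
  rw [← Finset.univ_sum_single (w j • x)]
  exact K.sum_mem fun i _ => by simpa [mul_comm] using hsingle i (x i)

theorem Matrix.GeneralLinearGroup.eq_one_of_sub_mulVec_mem_of_fixes [NoZeroDivisors R]
    [Nontrivial ι] (hK : ∀ g : GL ι R, ∀ w ∈ K, (g : Matrix ι ι R) *ᵥ w ∈ K) (g : GL ι R)
    (hsub : ∀ x, x - (g : Matrix ι ι R) *ᵥ x ∈ K)
    (hfix : ∀ w ∈ K, (g : Matrix ι ι R) *ᵥ w = w) : g = 1 := by
  have hg : ∀ x, (g : Matrix ι ι R) *ᵥ x = x := by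
    intro x
    set y := x - (g : Matrix ι ι R) *ᵥ x with hy
    suffices y = 0 from (sub_eq_zero.mp this).symm
    funext j
    have hyj : y j • y = 0 := by
      rw [hy, smul_sub, ← mulVec_smul,
        hfix _ (AddSubgroup.smul_mem_of_forall_mulVec_mem hK (hsub x) j x), sub_self]
    exact mul_self_eq_zero.mp (congrFun hyj j)
  exact Units.ext (mulVec_injective (funext fun x => by rw [hg, Units.val_one, one_mulVec]))

end TransvectionInvariant

section SemidirectProduct

variable {N H : Type*} [CommGroup N] [Group H] {φ : H →* MulAut N}

theorem SemidirectProduct.commutatorElement_inl (x : N) (m : N ⋊[φ] H) :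
    ⁅(inl x : N ⋊[φ] H), m⁆ = inl (x * (φ m.right x)⁻¹) := by
  ext
  · simp only [commutatorElement_def, mul_left, left_inl, right_inl, map_one, MulAut.one_apply,
      mul_right, one_mul, inv_left, inv_one, map_inv, inv_right, mul_one, MulAut.inv_apply,
      MulEquiv.apply_symm_apply, map_mul]
    rw [mul_right_comm (x * m.left), mul_inv_cancel_right]
  · simp [commutatorElement_def]

variable {M : Subgroup (N ⋊[φ] H)}

theorem SemidirectProduct.apply_mem_comap_inl [hM : M.Normal] (g : H) {x : N}
    (hx : x ∈ M.comap inl) : φ g x ∈ M.comap inl := by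
  rw [Subgroup.mem_comap, inl_aut, map_inv]
  exact hM.conj_mem _ hx _

theorem SemidirectProduct.mul_inv_apply_mem_comap_inl [hM : M.Normal] {m : N ⋊[φ] H}
    (hm : m ∈ M) (x : N) : x * (φ m.right x)⁻¹ ∈ M.comap inl := by
  rw [Subgroup.mem_comap, ← commutatorElement_inl, commutatorElement_def]
  exact M.mul_mem (hM.conj_mem m hm _) (M.inv_mem hm)

theorem SemidirectProduct.apply_right_eq_of_mem_comap_inl [IsMulCommutative M]
    {m : N ⋊[φ] H} (hm : m ∈ M) {x : N} (hx : x ∈ M.comap inl) : φ m.right x = x := by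
  have h := congrArg left (setLike_mul_comm hm (Subgroup.mem_comap.mp hx))
  simp only [mul_left, left_inl, right_inl, map_one, MulAut.one_apply] at h
  exact mul_left_cancel (h.trans (mul_comm _ _))

end SemidirectProduct

theorem Subgroup.characteristic_of_isGreatest {G : Type*} [Group G] {N : Subgroup G}
    (hN : IsGreatest {M : Subgroup G | M.Normal ∧ IsMulCommutative M} N) :
    N.Characteristic := by
  obtain ⟨⟨hNormal, hComm⟩, hmax⟩ := hN
  exact characteristic_iff_map_le.mpr fun ϕ => hmax ⟨hNormal.map _ ϕ.surjective, inferInstance⟩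

theorem le_range_inl_of_isMulCommutative {n : ℕ} (hn : 2 ≤ n)
    (M : Subgroup (Multiplicative (Fin n → ℤ) ⋊[glAction n] GL (Fin n) ℤ)) [M.Normal]
    [IsMulCommutative M] : M ≤ inl.range := by
  have : Nontrivial (Fin n) := Fin.nontrivial_iff_two_le.mpr hn
  intro m hm
  rw [range_inl_eq_ker_rightHom, MonoidHom.mem_ker, rightHom_eq_right]
  exact GeneralLinearGroup.eq_one_of_sub_mulVec_mem_of_fixes (K := (M.comap inl).toAddSubgroup')
    (fun g _ hw => apply_mem_comap_inl g hw) m.right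
    (fun x => mul_inv_apply_mem_comap_inl hm (.ofAdd x))
    (fun _ hw => congrArg Multiplicative.toAdd (apply_right_eq_of_mem_comap_inl hm hw))

/-- Every automorphism of `ℤⁿ ⋊ GL(n,ℤ)` (`n ≥ 2`) maps the normal subgroup
`ℤⁿ` onto itself. -/
theorem aut_preserves_Zn {n : ℕ} (hn : 2 ≤ n)
    (α : (Multiplicative (Fin n → ℤ) ⋊[glAction n] GL (Fin n) ℤ) ≃*
      (Multiplicative (Fin n → ℤ) ⋊[glAction n] GL (Fin n) ℤ)) :
    Subgroup.map α.toMonoidHom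
        (SemidirectProduct.inl :
          Multiplicative (Fin n → ℤ) →* _ ⋊[glAction n] GL (Fin n) ℤ).range =
      (SemidirectProduct.inl :
        Multiplicative (Fin n → ℤ) →* _ ⋊[glAction n] GL (Fin n) ℤ).range := by
  have hmax : IsGreatest {M : Subgroup (Multiplicative (Fin n → ℤ) ⋊[glAction n] GL (Fin n) ℤ) |
      M.Normal ∧ IsMulCommutative M} (inl : Multiplicative (Fin n → ℤ) →* _).range :=
    ⟨⟨by rw [range_inl_eq_ker_rightHom]; infer_instance, inferInstance⟩,
      fun M ⟨_, _⟩ => le_range_inl_of_isMulCommutative hn M⟩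
  exact Subgroup.characteristic_iff_map_eq.mp (Subgroup.characteristic_of_isGreatest hmax) α
end

section
/- Let n ≥ 2 and δ : Sp(2n,ℤ) → ℤ^{2n} a 1-cocycle that vanishes on all block-diagonal elements diag(A,(Aᵗ)⁻¹) for A ∈ GL(n,ℤ). Write δ([[I,B],[0,I]]) = (δ₁(B), δ₂(B)) for B symmetric. Then δ₂ : M_n(ℤ)^{sym} → ℤⁿ is a group homomorphism and δ₁(B+C) = δ₁(B) + δ₁(C) + B·δ₂(C); consequently B·δ₂(C) = C·δ₂(B) for all symmetric B, C, which forces δ₂ = 0. -/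
/-- The upper unitriangular symplectic matrix `[[I, B], [0, I]]`. -/
def upperUni {n : ℕ} (B : Matrix (Fin n) (Fin n) ℤ) :
    Matrix (Fin n ⊕ Fin n) (Fin n ⊕ Fin n) ℤ :=
  Matrix.fromBlocks 1 B 0 1

/-- The block-diagonal symplectic matrix `diag(A, (Aᵗ)⁻¹)` for `A ∈ GL(n,ℤ)`. -/
def blockDiag {n : ℕ} (A : GL (Fin n) ℤ) :
    Matrix (Fin n ⊕ Fin n) (Fin n ⊕ Fin n) ℤ :=
  Matrix.fromBlocks (A : Matrix (Fin n) (Fin n) ℤ) 0 0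
    (Matrix.transpose ((A⁻¹ : GL (Fin n) ℤ) : Matrix (Fin n) (Fin n) ℤ))

/-!
Restricted to the abelian subgroup `{upperUni B}`, the cocycle identity reads
`δ(B + C) = δ(B) + upperUni B · δ(C)`; its lower half makes `δ₂` additive and its upper half
gives `δ₁(B + C) = δ₁(B) + δ₁(C) + B·δ₂(C)`. Since `B + C = C + B`, this forces
`B·δ₂(C) = C·δ₂(B)`; taking `B = 1` shows `δ₂(C) = C·v` with `v = δ₂(1)`, so `v` is a vector
with `B·C·v = C·B·v` for all symmetric `B, C`, and for `n ≥ 2` such a vector vanishes.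
-/

open Matrix

namespace Matrix

variable {ι R : Type*} [Fintype ι] [DecidableEq ι] [CommRing R]

/-- With `C = E_ii` and `B = E_ij + E_ji` one gets `B·C·v = vᵢ eⱼ` but `C·B·v = vⱼ eᵢ`. -/
theorem eq_zero_of_isSymm_mulVec_mulVec_comm [Nontrivial ι] {v : ι → R}
    (h : ∀ B C : Matrix ι ι R, B.IsSymm → C.IsSymm → B *ᵥ (C *ᵥ v) = C *ᵥ (B *ᵥ v)) :
    v = 0 := by
  funext i
  obtain ⟨j, hji⟩ := exists_ne i
  have hB : (single i j (1 : R) + single j i 1).IsSymm := by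
    simp only [IsSymm, transpose_add, transpose_single, add_comm]
  have hC : (single i i (1 : R)).IsSymm := transpose_single i i 1
  have := congrFun (h _ _ hB hC) j
  simpa [add_mulVec, single_mulVec, Function.update_apply, hji, hji.symm] using this

end Matrix

section upperUni

variable {n : ℕ}

theorem upperUni_mem_symplecticGroup {B : Matrix (Fin n) (Fin n) ℤ} (hB : B.IsSymm) :
    upperUni B ∈ symplecticGroup (Fin n) ℤ := by
  rw [SymplecticGroup.mem_iff, J]
  simp [upperUni, fromBlocks_multiply, fromBlocks_transpose, hB.eq]

theorem upperUni_mul_upperUni (B C : Matrix (Fin n) (Fin n) ℤ) :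
    upperUni B * upperUni C = upperUni (B + C) := by
  simp [upperUni, fromBlocks_multiply, add_comm]

theorem upperUni_mulVec_inl (B : Matrix (Fin n) (Fin n) ℤ) (v : Fin n ⊕ Fin n → ℤ) :
    (upperUni B *ᵥ v) ∘ Sum.inl = v ∘ Sum.inl + B *ᵥ (v ∘ Sum.inr) := by
  funext i
  simp [upperUni, mulVec, dotProduct, Fintype.sum_sum_type, one_apply]

theorem upperUni_mulVec_inr (B : Matrix (Fin n) (Fin n) ℤ) (v : Fin n ⊕ Fin n → ℤ) :
    (upperUni B *ᵥ v) ∘ Sum.inr = v ∘ Sum.inr := by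
  funext i
  simp [upperUni, mulVec, dotProduct, Fintype.sum_sum_type, one_apply]

end upperUni

def IsSymplecticCocycle {n : ℕ}
    (δ : Matrix (Fin n ⊕ Fin n) (Fin n ⊕ Fin n) ℤ → (Fin n ⊕ Fin n → ℤ)) : Prop :=
  ∀ g h, g ∈ symplecticGroup (Fin n) ℤ → h ∈ symplecticGroup (Fin n) ℤ →
    δ (g * h) = δ g + g *ᵥ δ h

namespace IsSymplecticCocycle

variable {n : ℕ} {δ : Matrix (Fin n ⊕ Fin n) (Fin n ⊕ Fin n) ℤ → (Fin n ⊕ Fin n → ℤ)}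
  {B C : Matrix (Fin n) (Fin n) ℤ}

theorem upperUni_add (hδ : IsSymplecticCocycle δ) (hB : B.IsSymm) (hC : C.IsSymm) :
    δ (upperUni (B + C)) = δ (upperUni B) + upperUni B *ᵥ δ (upperUni C) := by
  rw [← upperUni_mul_upperUni]
  exact hδ _ _ (upperUni_mem_symplecticGroup hB) (upperUni_mem_symplecticGroup hC)

theorem inr_upperUni_add (hδ : IsSymplecticCocycle δ) (hB : B.IsSymm) (hC : C.IsSymm) :
    δ (upperUni (B + C)) ∘ Sum.inr = δ (upperUni B) ∘ Sum.inr + δ (upperUni C) ∘ Sum.inr := by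
  rw [hδ.upperUni_add hB hC, Pi.add_comp, upperUni_mulVec_inr]

theorem inl_upperUni_add (hδ : IsSymplecticCocycle δ) (hB : B.IsSymm) (hC : C.IsSymm) :
    δ (upperUni (B + C)) ∘ Sum.inl =
      δ (upperUni B) ∘ Sum.inl + δ (upperUni C) ∘ Sum.inl + B *ᵥ (δ (upperUni C) ∘ Sum.inr) := by
  rw [hδ.upperUni_add hB hC, Pi.add_comp, upperUni_mulVec_inl, add_assoc]

theorem mulVec_inr_comm (hδ : IsSymplecticCocycle δ) (hB : B.IsSymm) (hC : C.IsSymm) :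
    B *ᵥ (δ (upperUni C) ∘ Sum.inr) = C *ᵥ (δ (upperUni B) ∘ Sum.inr) := by
  have h := (hδ.inl_upperUni_add hB hC).symm.trans (add_comm B C ▸ hδ.inl_upperUni_add hC hB)
  rwa [add_comm (δ (upperUni B) ∘ Sum.inl), add_left_cancel_iff] at h

theorem inr_upperUni_eq_mulVec (hδ : IsSymplecticCocycle δ) (hC : C.IsSymm) :
    δ (upperUni C) ∘ Sum.inr = C *ᵥ (δ (upperUni 1) ∘ Sum.inr) := by
  simpa using hδ.mulVec_inr_comm isSymm_one hC

theorem inr_upperUni_eq_zero [Nontrivial (Fin n)] (hδ : IsSymplecticCocycle δ) (hB : B.IsSymm) :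
    δ (upperUni B) ∘ Sum.inr = 0 := by
  suffices δ (upperUni 1) ∘ Sum.inr = 0 by rw [hδ.inr_upperUni_eq_mulVec hB, this, mulVec_zero]
  refine eq_zero_of_isSymm_mulVec_mulVec_comm fun B C hB hC => ?_
  rw [← hδ.inr_upperUni_eq_mulVec hB, ← hδ.inr_upperUni_eq_mulVec hC, hδ.mulVec_inr_comm hB hC]

end IsSymplecticCocycle

theorem sp_cocycle_block_analysis_general {n : ℕ} (hn : 2 ≤ n)
    (δ : Matrix (Fin n ⊕ Fin n) (Fin n ⊕ Fin n) ℤ → ((Fin n ⊕ Fin n) → ℤ))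
    (hcoc : ∀ g h, g ∈ Matrix.symplecticGroup (Fin n) ℤ →
      h ∈ Matrix.symplecticGroup (Fin n) ℤ → δ (g * h) = δ g + g.mulVec (δ h)) :
    (∀ B C : Matrix (Fin n) (Fin n) ℤ, B.IsSymm → C.IsSymm →
      (fun i => δ (upperUni (B + C)) (Sum.inr i)) =
        (fun i => δ (upperUni B) (Sum.inr i)) + fun i => δ (upperUni C) (Sum.inr i)) ∧
    (∀ B C : Matrix (Fin n) (Fin n) ℤ, B.IsSymm → C.IsSymm →
      (fun i => δ (upperUni (B + C)) (Sum.inl i)) =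
        ((fun i => δ (upperUni B) (Sum.inl i)) + fun i => δ (upperUni C) (Sum.inl i)) +
          B.mulVec fun i => δ (upperUni C) (Sum.inr i)) ∧
    (∀ B C : Matrix (Fin n) (Fin n) ℤ, B.IsSymm → C.IsSymm →
      (B.mulVec fun i => δ (upperUni C) (Sum.inr i)) =
        C.mulVec fun i => δ (upperUni B) (Sum.inr i)) ∧
    (∀ B : Matrix (Fin n) (Fin n) ℤ, B.IsSymm →
      (fun i => δ (upperUni B) (Sum.inr i)) = (0 : Fin n → ℤ)) := by
  have hδ : IsSymplecticCocycle δ := hcoc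
  have : Nontrivial (Fin n) := Fin.nontrivial_iff_two_le.mpr hn
  exact ⟨fun _ _ hB hC => hδ.inr_upperUni_add hB hC, fun _ _ hB hC => hδ.inl_upperUni_add hB hC,
    fun _ _ hB hC => hδ.mulVec_inr_comm hB hC, fun _ hB => hδ.inr_upperUni_eq_zero hB⟩

/-- Analysis of a 1-cocycle on `Sp(2n,ℤ)` vanishing on the block-diagonal
subgroup: in the notation `δ(upperUni B) = (δ₁ B, δ₂ B)`, the map `δ₂` is
additive, `δ₁` is additive up to the correction term `B·δ₂(C)`, whence
`B·δ₂(C) = C·δ₂(B)` for all symmetric `B, C`, which forces `δ₂ = 0`. -/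
theorem sp_cocycle_block_analysis {n : ℕ} (hn : 2 ≤ n)
    (δ : Matrix (Fin n ⊕ Fin n) (Fin n ⊕ Fin n) ℤ → ((Fin n ⊕ Fin n) → ℤ))
    (hcoc : ∀ g h, g ∈ Matrix.symplecticGroup (Fin n) ℤ →
      h ∈ Matrix.symplecticGroup (Fin n) ℤ → δ (g * h) = δ g + g.mulVec (δ h))
    (hdiag : ∀ A : GL (Fin n) ℤ, δ (blockDiag A) = 0) :
    (∀ B C : Matrix (Fin n) (Fin n) ℤ, B.IsSymm → C.IsSymm →
      (fun i => δ (upperUni (B + C)) (Sum.inr i)) =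
        (fun i => δ (upperUni B) (Sum.inr i)) + fun i => δ (upperUni C) (Sum.inr i)) ∧
    (∀ B C : Matrix (Fin n) (Fin n) ℤ, B.IsSymm → C.IsSymm →
      (fun i => δ (upperUni (B + C)) (Sum.inl i)) =
        ((fun i => δ (upperUni B) (Sum.inl i)) + fun i => δ (upperUni C) (Sum.inl i)) +
          B.mulVec fun i => δ (upperUni C) (Sum.inr i)) ∧
    (∀ B C : Matrix (Fin n) (Fin n) ℤ, B.IsSymm → C.IsSymm →
      (B.mulVec fun i => δ (upperUni C) (Sum.inr i)) =
        C.mulVec fun i => δ (upperUni B) (Sum.inr i)) ∧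
    (∀ B : Matrix (Fin n) (Fin n) ℤ, B.IsSymm →
      (fun i => δ (upperUni B) (Sum.inr i)) = (0 : Fin n → ℤ)) :=
  sp_cocycle_block_analysis_general hn δ hcoc
end

section
/- Let δ₁ : M_n(ℤ)^{sym} → ℤⁿ be a group homomorphism satisfying δ₁(A B Aᵗ) = A·δ₁(B) for all A ∈ GL(n,ℤ) and all symmetric B ∈ M_n(ℤ). Then δ₁ = 0. -/
/-- An additive map `δ₁` on symmetric integer matrices satisfying the
equivariance `δ₁(A B Aᵗ) = A·δ₁(B)` for all `A ∈ GL(n,ℤ)` vanishes. -/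
theorem equivariant_additive_map_on_symmetric_vanishes {n : ℕ}
    (δ₁ : Matrix (Fin n) (Fin n) ℤ → (Fin n → ℤ))
    (hadd : ∀ B C : Matrix (Fin n) (Fin n) ℤ, B.IsSymm → C.IsSymm →
      δ₁ (B + C) = δ₁ B + δ₁ C)
    (hequiv : ∀ (A : GL (Fin n) ℤ) (B : Matrix (Fin n) (Fin n) ℤ), B.IsSymm →
      δ₁ ((A : Matrix (Fin n) (Fin n) ℤ) * B *
          Matrix.transpose (A : Matrix (Fin n) (Fin n) ℤ)) =
        (A : Matrix (Fin n) (Fin n) ℤ).mulVec (δ₁ B)) :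
    ∀ B : Matrix (Fin n) (Fin n) ℤ, B.IsSymm → δ₁ B = 0 := by
  intro B hB
  have h := hequiv (-1) B hB
  simp [Matrix.neg_mul, Matrix.mul_neg, Matrix.neg_mulVec, Matrix.transpose_neg] at h
  funext i
  have := congrFun h i
  simp only [Pi.neg_apply, Pi.zero_apply] at this ⊢
  omega
end

section
/- Every 1-cocycle δ : Sp(2n,ℤ) → ℤ^{2n} is a coboundary for n ≥ 2, i.e., H¹(Sp(2n,ℤ), ℤ^{2n}) = 0. -/
/-!
The central element `-1` of `Sp(2n,ℤ)` acts on `ℤ^{2n}` as `-1`, so comparing the cocycle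
relation for `g * (-1)` and `(-1) * g` gives `2 δ(g) = w - g w` with `w = δ(-1)`. Applied to the
transvections `[[1,1],[0,1]]` and `[[1,0],[1,1]]`, this shows that both halves of `w` are even,
`w = 2 y`, and since `ℤ^{2n}` is torsion-free, `δ(g) = y - g y`.
-/

open Matrix

section Cocycle

variable {ι R : Type*} [Fintype ι] [Ring R] {δ : Matrix ι ι R → ι → R}

lemma two_nsmul_cocycle_eq_sub_mulVec [DecidableEq ι] {S : Set (Matrix ι ι R)}
    (hδ : ∀ g h, g ∈ S → h ∈ S → δ (g * h) = δ g + g *ᵥ δ h)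
    (hneg : -1 ∈ S) {g : Matrix ι ι R} (hg : g ∈ S) :
    2 • δ g = δ (-1) - g *ᵥ δ (-1) := by
  have hcomm := (hδ (-1) g hneg hg).symm.trans
    ((congrArg δ (Commute.neg_one_left g).eq).trans (hδ g (-1) hg hneg))
  rw [neg_mulVec, one_mulVec] at hcomm
  rw [two_nsmul, eq_sub_iff_add_eq, add_assoc, ← hcomm]
  abel

lemma eq_sub_mulVec_of_two_nsmul_eq [IsAddTorsionFree R] {w y : ι → R}
    (hw : w = 2 • y) {g : Matrix ι ι R} (hg : 2 • δ g = w - g *ᵥ w) :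
    δ g = y - g *ᵥ y := by
  refine nsmul_right_injective two_ne_zero ?_
  simp only [hg, hw, mulVec_smul, smul_sub]

end Cocycle

section Transvection

variable {m R : Type*} [Fintype m] [DecidableEq m]

lemma fromBlocks_one_one_zero_one_mulVec_inl [NonAssocSemiring R] (v : m ⊕ m → R) (i : m) :
    ((fromBlocks 1 1 0 1 : Matrix (m ⊕ m) (m ⊕ m) R) *ᵥ v) (.inl i) =
      v (.inl i) + v (.inr i) := by
  simp [fromBlocks_mulVec]

lemma fromBlocks_one_zero_one_one_mulVec_inr [NonAssocSemiring R] (v : m ⊕ m → R) (i : m) :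
    ((fromBlocks 1 0 1 1 : Matrix (m ⊕ m) (m ⊕ m) R) *ᵥ v) (.inr i) =
      v (.inl i) + v (.inr i) := by
  simp [fromBlocks_mulVec]

lemma exists_eq_two_nsmul_of_transvections [Ring R] {w : m ⊕ m → R}
    (hU : ∃ a, 2 • a = w - (fromBlocks 1 1 0 1 : Matrix (m ⊕ m) (m ⊕ m) R) *ᵥ w)
    (hL : ∃ b, 2 • b = w - (fromBlocks 1 0 1 1 : Matrix (m ⊕ m) (m ⊕ m) R) *ᵥ w) :
    ∃ y, w = 2 • y := by
  obtain ⟨a, ha⟩ := hU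
  obtain ⟨b, hb⟩ := hL
  refine ⟨-Sum.elim (b ∘ .inr) (a ∘ .inl), funext fun i => ?_⟩
  rcases i with i | i
  · have := congrFun hb (.inr i)
    simp only [Pi.sub_apply, fromBlocks_one_zero_one_one_mulVec_inr, Pi.smul_apply] at this
    simp [this]
  · have := congrFun ha (.inl i)
    simp only [Pi.sub_apply, fromBlocks_one_one_zero_one_mulVec_inl, Pi.smul_apply] at this
    simp [this]

end Transvection

section Symplectic

variable {m R : Type*} [Fintype m] [DecidableEq m] [CommRing R]

lemma fromBlocks_one_symm_zero_one_mem_symplecticGroup {B : Matrix m m R} (hB : Bᵀ = B) :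
    fromBlocks 1 B 0 1 ∈ symplecticGroup m R := by
  rw [SymplecticGroup.mem_iff]
  simp [J, fromBlocks_multiply, fromBlocks_transpose, hB]

lemma fromBlocks_one_zero_symm_one_mem_symplecticGroup {C : Matrix m m R} (hC : Cᵀ = C) :
    fromBlocks 1 0 C 1 ∈ symplecticGroup m R := by
  rw [SymplecticGroup.mem_iff]
  simp [J, fromBlocks_multiply, fromBlocks_transpose, hC]

end Symplectic

theorem sp_cocycle_is_coboundary_general {n : ℕ}
    (δ : Matrix (Fin n ⊕ Fin n) (Fin n ⊕ Fin n) ℤ → ((Fin n ⊕ Fin n) → ℤ))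
    (hcoc : ∀ g h, g ∈ Matrix.symplecticGroup (Fin n) ℤ →
      h ∈ Matrix.symplecticGroup (Fin n) ℤ → δ (g * h) = δ g + g.mulVec (δ h)) :
    ∃ y : (Fin n ⊕ Fin n) → ℤ, ∀ g ∈ Matrix.symplecticGroup (Fin n) ℤ,
      δ g = y - g.mulVec y := by
  have key : ∀ g ∈ symplecticGroup (Fin n) ℤ, 2 • δ g = δ (-1) - g *ᵥ δ (-1) :=
    fun g hg => two_nsmul_cocycle_eq_sub_mulVec hcoc (SymplecticGroup.neg_mem (one_mem _)) hg
  obtain ⟨y, hy⟩ := exists_eq_two_nsmul_of_transvections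
    ⟨_, key _ (fromBlocks_one_symm_zero_one_mem_symplecticGroup transpose_one)⟩
    ⟨_, key _ (fromBlocks_one_zero_symm_one_mem_symplecticGroup transpose_one)⟩
  exact ⟨y, fun g hg => eq_sub_mulVec_of_two_nsmul_eq hy (key g hg)⟩

/-- For `n ≥ 2`, every 1-cocycle `δ : Sp(2n,ℤ) → ℤ^{2n}` is a coboundary:
`H¹(Sp(2n,ℤ), ℤ^{2n}) = 0`. -/
theorem sp_cocycle_is_coboundary {n : ℕ} (hn : 2 ≤ n)
    (δ : Matrix (Fin n ⊕ Fin n) (Fin n ⊕ Fin n) ℤ → ((Fin n ⊕ Fin n) → ℤ))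
    (hcoc : ∀ g h, g ∈ Matrix.symplecticGroup (Fin n) ℤ →
      h ∈ Matrix.symplecticGroup (Fin n) ℤ → δ (g * h) = δ g + g.mulVec (δ h)) :
    ∃ y : (Fin n ⊕ Fin n) → ℤ, ∀ g ∈ Matrix.symplecticGroup (Fin n) ℤ,
      δ g = y - g.mulVec y :=
  sp_cocycle_is_coboundary_general δ hcoc
end

section
/- Let K be a number field of degree n over ℚ with no intermediate fields strictly between ℚ and K. Let π : O_K* ⋊ Gal(K/ℚ) → GL(n,ℤ) be the representation defined by the action on a ℤ-basis of O_K, and let G₀ be its image. If u, w ∈ O_K* \ {±1}, g ∈ GL(n,ℤ) and g π(u) g⁻¹ = π(w), then g ∈ G₀. Consequently g G₀ g⁻¹ ∩ G₀ is finite for every g ∈ GL(n,ℤ) \ G₀. -/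
open NumberField

/-- The integer matrix representing multiplication by the unit `u` composed with
the ring automorphism `σ` of `𝓞 K`, with respect to the `ℤ`-basis `b`:
`(piRep b u σ) · ω = u · ω^σ`. -/
noncomputable def piRep {K : Type*} [Field K] {n : ℕ}
    (b : Module.Basis (Fin n) ℤ (𝓞 K)) (u : (𝓞 K)ˣ) (σ : 𝓞 K ≃+* 𝓞 K) :
    Matrix (Fin n) (Fin n) ℤ :=
  Matrix.of fun i j => b.repr ((u : 𝓞 K) * σ (b i)) j

/-- The image `G₀` of `O_K* ⋊ Gal(K/ℚ)` in the integer matrices. -/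
noncomputable def G₀ {K : Type*} [Field K] {n : ℕ}
    (b : Module.Basis (Fin n) ℤ (𝓞 K)) : Set (Matrix (Fin n) (Fin n) ℤ) :=
  {M | ∃ (u : (𝓞 K)ˣ) (σ : 𝓞 K ≃+* 𝓞 K), M = piRep b u σ}

/-!
If `g π(u) g⁻¹ = π(w)`, the `ℤ`-linear automorphism `φ` of `𝓞 K` with matrix `gᵀ` satisfies
`φ (w x) = u φ(x)`. Its `ℚ`-linear extension to `K` then satisfies `φ(p(w)) = p(u) φ(1)` for every
`p ∈ ℚ[X]`. As `w ≠ ±1` is a unit, `w ∉ ℚ`, so `w` generates `K`; hence `u` is a root of the minimal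
polynomial of `w`, and with `σ` the automorphism sending `w` to `u` we get `φ = φ(1) · σ`, where
`φ(1)` is a unit because `φ` is invertible. Thus `g = π(φ(1), σ)`.

For the finiteness, if `M₁, M₂ ∈ G₀` have the same automorphism part and so do `g M₁ g⁻¹, g M₂ g⁻¹`,
then `M₁ = π(t, 1) M₂` and `g π(t, 1) g⁻¹ = π(s, 1)`. Since `g ∉ G₀`, the first part forces
`s = ±1`, so `M₁ = ±M₂`. There are finitely many pairs of automorphisms, so the set is finite.
-/

open Polynomial IntermediateField Matrix

theorem Set.finite_of_forall_eq_or_eq_neg {α : Type*} [Neg α] {s : Set α}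
    (h : ∀ x ∈ s, ∀ y ∈ s, x = y ∨ x = -y) : s.Finite := by
  rcases s.eq_empty_or_nonempty with rfl | ⟨y, hy⟩
  · exact Set.finite_empty
  · refine ((Set.finite_singleton y).insert (-y)).subset fun x hx => ?_
    rcases h x hx y hy with rfl | rfl <;> simp

section MatrixToLin

variable {R M ι : Type*} [CommRing R] [AddCommGroup M] [Module R M] [Fintype ι] [DecidableEq ι]
  (b : Module.Basis ι R M)

theorem Matrix.toLin_transpose_mul (A B : Matrix ι ι R) :
    toLin b b (A * B)ᵀ = toLin b b Bᵀ ∘ₗ toLin b b Aᵀ := by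
  rw [transpose_mul, toLin_mul b b b]

theorem Matrix.toLin_transpose_injective :
    Function.Injective fun A : Matrix ι ι R => Matrix.toLin b b Aᵀ :=
  (toLin b b).injective.comp transpose_injective

theorem Matrix.bijective_toLin_transpose_iff (A : Matrix ι ι R) :
    Function.Bijective (toLin b b Aᵀ) ↔ IsUnit A := by
  rw [← Module.End.isUnit_iff, ← isUnit_transpose (A := A)]
  exact isUnit_map_iff (toLinAlgEquiv b) Aᵀ

end MatrixToLin

theorem exists_algEquiv_eq_mul_of_map_mul {F L : Type*} [Field F] [Field L] [Algebra F L]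
    [FiniteDimensional F L] {w u : L} (hw : F⟮w⟯ = ⊤) (Φ : L →ₗ[F] L)
    (hΦ : ∀ z, Φ (w * z) = u * Φ z) (hΦ1 : Φ 1 ≠ 0) :
    ∃ σ : L ≃ₐ[F] L, ∀ z, Φ z = Φ 1 * σ z := by
  have hΦ_aeval (p : F[X]) : Φ (aeval w p) = aeval u p * Φ 1 := by
    induction p using Polynomial.induction_on' with
    | add p q hp hq => rw [map_add, map_add, map_add, add_mul, hp, hq]
    | monomial k a =>
      have hpow : Φ (w ^ k) = u ^ k * Φ 1 := by
        induction k with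
        | zero => simp
        | succ k ih => rw [pow_succ', hΦ, ih, pow_succ', mul_assoc]
      rw [aeval_monomial, aeval_monomial, ← Algebra.smul_def, map_smul, hpow,
        Algebra.smul_def, mul_assoc]
  have hroot : aeval u (minpoly F w) = 0 := by
    simpa [hΦ1] using (hΦ_aeval (minpoly F w)).symm
  let pb : PowerBasis F L :=
    (adjoin.powerBasis (IsIntegral.of_finite F w)).map ((equivOfEq hw).trans topEquiv)
  have hgen : pb.gen = w := by simp [pb, adjoin.powerBasis_gen]
  let σ : L →ₐ[F] L := pb.lift u (by rwa [hgen])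
  refine ⟨AlgEquiv.ofBijective σ (Algebra.IsAlgebraic.algHom_bijective σ), fun z => ?_⟩
  obtain ⟨p, rfl⟩ := pb.exists_eq_aeval' z
  rw [AlgEquiv.ofBijective_apply, ← aeval_algHom_apply σ, pb.lift_gen, hgen, hΦ_aeval, mul_comm]

section UnitTwist

variable {K : Type*} [Field K]

noncomputable def unitTwist (u : (𝓞 K)ˣ) (σ : 𝓞 K ≃+* 𝓞 K) : 𝓞 K →ₗ[ℤ] 𝓞 K :=
  LinearMap.mulLeft ℤ (u : 𝓞 K) ∘ₗ σ.toIntAlgEquiv.toLinearMap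

@[simp]
theorem unitTwist_apply (u : (𝓞 K)ˣ) (σ : 𝓞 K ≃+* 𝓞 K) (x : 𝓞 K) :
    unitTwist u σ x = u * σ x :=
  rfl

theorem unitTwist_comp (u v : (𝓞 K)ˣ) (σ τ : 𝓞 K ≃+* 𝓞 K) :
    unitTwist v τ ∘ₗ unitTwist u σ = unitTwist (v * Units.map (τ : 𝓞 K →* 𝓞 K) u) (σ.trans τ) := by
  ext x
  simp [mul_assoc]

variable [NumberField K]

namespace NumberField.RingOfIntegers

theorem coe_unit_mem_bot_iff {u : (𝓞 K)ˣ} :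
    ((u : 𝓞 K) : K) ∈ (⊥ : IntermediateField ℚ K) ↔ (u : 𝓞 K) = 1 ∨ (u : 𝓞 K) = -1 := by
  refine ⟨fun hu => ?_, ?_⟩
  · obtain ⟨q, hq⟩ := mem_bot.mp hu
    have hq_int : IsIntegral ℤ q := by
      rw [← isIntegral_algebraMap_iff (algebraMap ℚ K).injective, hq]
      exact isIntegral_coe _
    obtain ⟨m, rfl⟩ := IsIntegrallyClosed.isIntegral_iff.mp hq_int
    have hum : (u : 𝓞 K) = algebraMap ℤ (𝓞 K) m := coe_injective (by simpa using hq.symm)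
    have hm : IsUnit m := (isUnit_map_iff (algebraMap ℤ (𝓞 K)) m).mp (hum ▸ u.isUnit)
    rcases Int.isUnit_iff.mp hm with rfl | rfl <;> simp [hum]
  · rintro (h | h) <;> simp [h]

theorem adjoin_coe_unit_eq_top (hmin : ∀ F : IntermediateField ℚ K, F = ⊥ ∨ F = ⊤)
    {u : (𝓞 K)ˣ} (h1 : (u : 𝓞 K) ≠ 1) (h2 : (u : 𝓞 K) ≠ -1) : ℚ⟮((u : 𝓞 K) : K)⟯ = ⊤ :=
  (hmin _).resolve_left fun h => by
    have := (coe_unit_mem_bot_iff (u := u)).mp (h ▸ mem_adjoin_simple_self ℚ _)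
    tauto

instance : Finite (𝓞 K ≃+* 𝓞 K) :=
  Finite.of_equiv _ ((galRestrict ℤ ℚ K (𝓞 K)).toEquiv.trans (RingEquiv.equivIntAlgEquiv _ _).symm)

end NumberField.RingOfIntegers

theorem exists_unitTwist_eq_of_map_mul {u w : 𝓞 K} (hw : ℚ⟮(w : K)⟯ = ⊤)
    (φ : 𝓞 K →ₗ[ℤ] 𝓞 K) (hφ : Function.Bijective φ) (hmul : ∀ x, φ (w * x) = u * φ x) :
    ∃ (v : (𝓞 K)ˣ) (σ : 𝓞 K ≃+* 𝓞 K), φ = unitTwist v σ := by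
  -- `K` is the localization of `𝓞 K` at `ℤ ∖ {0}`, so `φ` extends to a `ℚ`-linear map `Φ` of `K`.
  let ι := (IsScalarTower.toAlgHom ℤ (𝓞 K) K).toLinearMap
  let Φ : K →ₗ[ℚ] K := IsLocalizedModule.mapExtendScalars (nonZeroDivisors ℤ) ι ι ℚ φ
  have hΦ (x : 𝓞 K) : Φ (algebraMap (𝓞 K) K x) = algebraMap (𝓞 K) K (φ x) :=
    IsLocalizedModule.map_apply _ ι ι φ x
  have hΦ_mul : ∀ z, Φ (w * z) = u * Φ z := by
    suffices (Φ ∘ₗ LinearMap.mulLeft ℚ (w : K)).restrictScalars ℤ =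
        (LinearMap.mulLeft ℚ (u : K) ∘ₗ Φ).restrictScalars ℤ from
      fun z => LinearMap.congr_fun this z
    refine IsLocalizedModule.linearMap_ext (nonZeroDivisors ℤ) ι ι (LinearMap.ext fun x => ?_)
    change Φ (algebraMap _ K w * algebraMap _ K x) = algebraMap _ K u * Φ (algebraMap _ K x)
    rw [← map_mul, hΦ, hΦ, hmul, map_mul]
  have hφ1 : φ 1 ≠ 0 := hφ.injective.ne_iff' (map_zero φ) |>.mpr one_ne_zero
  obtain ⟨σ, hσ⟩ := exists_algEquiv_eq_mul_of_map_mul hw Φ hΦ_mul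
    (by rwa [← map_one (algebraMap (𝓞 K) K), hΦ, ne_eq, FaithfulSMul.algebraMap_eq_zero_iff])
  let τ := RingOfIntegers.mapRingEquiv σ.toRingEquiv
  have hφτ (x : 𝓞 K) : φ x = φ 1 * τ x := FaithfulSMul.algebraMap_injective (𝓞 K) K (by
    simpa [τ, ← hΦ] using hσ x)
  obtain ⟨y, hy⟩ := hφ.surjective 1
  exact ⟨⟨φ 1, τ y, by rw [← hφτ, hy], by rw [mul_comm, ← hφτ, hy]⟩, τ, LinearMap.ext hφτ⟩

end UnitTwist

section PiRep

variable {K : Type*} [Field K] {n : ℕ} (b : Module.Basis (Fin n) ℤ (𝓞 K))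

theorem toLin_transpose_piRep (u : (𝓞 K)ˣ) (σ : 𝓞 K ≃+* 𝓞 K) :
    toLin b b (piRep b u σ)ᵀ = unitTwist u σ :=
  b.ext fun i => by
    rw [toLin_self]
    simpa [piRep] using b.sum_repr _

theorem piRep_mul (u v : (𝓞 K)ˣ) (σ τ : 𝓞 K ≃+* 𝓞 K) :
    piRep b u σ * piRep b v τ = piRep b (v * Units.map (τ : 𝓞 K →* 𝓞 K) u) (σ.trans τ) :=
  toLin_transpose_injective b <| by
    simp only [toLin_transpose_mul, toLin_transpose_piRep, unitTwist_comp]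

theorem piRep_one : piRep b 1 (RingEquiv.refl _) = 1 :=
  toLin_transpose_injective b <| by
    ext x
    simp [toLin_transpose_piRep]

theorem piRep_neg (u : (𝓞 K)ˣ) (σ : 𝓞 K ≃+* 𝓞 K) : piRep b (-u) σ = -piRep b u σ := by
  ext i j
  simp [piRep]

theorem isUnit_piRep (u : (𝓞 K)ˣ) (σ : 𝓞 K ≃+* 𝓞 K) : IsUnit (piRep b u σ) := by
  rw [← bijective_toLin_transpose_iff b, toLin_transpose_piRep]
  exact (Units.mulLeft_bijective u).comp σ.bijective

theorem exists_piRep_eq_piRep_refl_mul (v₁ v₂ : (𝓞 K)ˣ) (σ : 𝓞 K ≃+* 𝓞 K) :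
    ∃ t, piRep b v₁ σ = piRep b t (RingEquiv.refl _) * piRep b v₂ σ := by
  refine ⟨Units.map (σ.symm : 𝓞 K →* 𝓞 K) (v₁ * v₂⁻¹), ?_⟩
  rw [piRep_mul]
  congr 1
  apply Units.ext
  simp [mul_left_comm]

end PiRep

section AlmostMalnormal

variable {K : Type*} [Field K] [NumberField K] {n : ℕ} (b : Module.Basis (Fin n) ℤ (𝓞 K))

theorem mem_G₀_of_conj_piRep_eq (hmin : ∀ F : IntermediateField ℚ K, F = ⊥ ∨ F = ⊤)
    {u w : (𝓞 K)ˣ} (hw1 : (w : 𝓞 K) ≠ 1) (hw2 : (w : 𝓞 K) ≠ -1) (g : GL (Fin n) ℤ)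
    (h : (g : Matrix (Fin n) (Fin n) ℤ) * piRep b u (RingEquiv.refl _) *
        ((g⁻¹ : GL (Fin n) ℤ) : Matrix (Fin n) (Fin n) ℤ) = piRep b w (RingEquiv.refl _)) :
    (g : Matrix (Fin n) (Fin n) ℤ) ∈ G₀ b := by
  set φ := toLin b b (g : Matrix (Fin n) (Fin n) ℤ)ᵀ
  have hcomm : unitTwist u (RingEquiv.refl _) ∘ₗ φ = φ ∘ₗ unitTwist w (RingEquiv.refl _) := by
    rw [← toLin_transpose_piRep, ← toLin_transpose_piRep, ← toLin_transpose_mul,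
      ← toLin_transpose_mul, (Units.mul_inv_eq_iff_eq_mul (b := g)).mp h]
  obtain ⟨v, σ, hφ⟩ := exists_unitTwist_eq_of_map_mul
    (RingOfIntegers.adjoin_coe_unit_eq_top hmin hw1 hw2) φ
    ((bijective_toLin_transpose_iff b _).mpr g.isUnit)
    fun x => by simpa using (LinearMap.congr_fun hcomm x).symm
  exact ⟨v, σ, toLin_transpose_injective b (hφ.trans (toLin_transpose_piRep b v σ).symm)⟩

theorem piRep_eq_or_eq_neg_of_conj_mem (hmin : ∀ F : IntermediateField ℚ K, F = ⊥ ∨ F = ⊤)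
    {g : GL (Fin n) ℤ} (hg : (g : Matrix (Fin n) (Fin n) ℤ) ∉ G₀ b)
    {v₁ v₂ v₁' v₂' : (𝓞 K)ˣ} {σ τ : 𝓞 K ≃+* 𝓞 K}
    (h₁ : (g : Matrix (Fin n) (Fin n) ℤ) * piRep b v₁ σ *
        ((g⁻¹ : GL (Fin n) ℤ) : Matrix (Fin n) (Fin n) ℤ) = piRep b v₁' τ)
    (h₂ : (g : Matrix (Fin n) (Fin n) ℤ) * piRep b v₂ σ *
        ((g⁻¹ : GL (Fin n) ℤ) : Matrix (Fin n) (Fin n) ℤ) = piRep b v₂' τ) :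
    piRep b v₁ σ = piRep b v₂ σ ∨ piRep b v₁ σ = -piRep b v₂ σ := by
  let c := MulSemiringAction.toRingEquiv (ConjAct (GL (Fin n) ℤ)) (Matrix (Fin n) (Fin n) ℤ)
    (ConjAct.toConjAct g)
  have hc (M : Matrix (Fin n) (Fin n) ℤ) : c M =
      (g : Matrix (Fin n) (Fin n) ℤ) * M * ((g⁻¹ : GL (Fin n) ℤ) : Matrix (Fin n) (Fin n) ℤ) :=
    ConjAct.units_smul_def _ _
  obtain ⟨t, ht⟩ := exists_piRep_eq_piRep_refl_mul b v₁ v₂ σ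
  obtain ⟨s, hs⟩ := exists_piRep_eq_piRep_refl_mul b v₁' v₂' τ
  have hts : c (piRep b t (RingEquiv.refl _)) = piRep b s (RingEquiv.refl _) := by
    apply (isUnit_piRep b v₂' τ).mul_left_injective
    dsimp only
    rw [← hs, ← h₁, ← h₂, ← hc, ← hc, ← map_mul, ← ht]
  have hs_triv : s = 1 ∨ s = -1 := by
    by_contra! hs_ne
    exact hg (mem_G₀_of_conj_piRep_eq b hmin (fun h => hs_ne.1 (Units.ext h))
      (fun h => hs_ne.2 (Units.ext h)) g (hc _ ▸ hts))
  rcases hs_triv with rfl | rfl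
  · left
    rw [ht, c.injective (hts.trans ((piRep_one b).trans (map_one c).symm)), one_mul]
  · right
    rw [ht, c.injective (hts.trans (by rw [piRep_neg, piRep_one, map_neg, map_one])), neg_one_mul]

theorem finite_setOf_mem_G₀_and_conj_mem_G₀ (hmin : ∀ F : IntermediateField ℚ K, F = ⊥ ∨ F = ⊤)
    {g : GL (Fin n) ℤ} (hg : (g : Matrix (Fin n) (Fin n) ℤ) ∉ G₀ b) :
    {M | M ∈ G₀ b ∧ (g : Matrix (Fin n) (Fin n) ℤ) * M *
      ((g⁻¹ : GL (Fin n) ℤ) : Matrix (Fin n) (Fin n) ℤ) ∈ G₀ b}.Finite := by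
  let T (p : (𝓞 K ≃+* 𝓞 K) × (𝓞 K ≃+* 𝓞 K)) : Set (Matrix (Fin n) (Fin n) ℤ) :=
    {M | ∃ v v', M = piRep b v p.1 ∧ (g : Matrix (Fin n) (Fin n) ℤ) * M *
      ((g⁻¹ : GL (Fin n) ℤ) : Matrix (Fin n) (Fin n) ℤ) = piRep b v' p.2}
  refine (Set.finite_iUnion fun p => Set.finite_of_forall_eq_or_eq_neg (s := T p) ?_).subset ?_
  · rintro _ ⟨v₁, v₁', rfl, h₁⟩ _ ⟨v₂, v₂', rfl, h₂⟩
    exact piRep_eq_or_eq_neg_of_conj_mem b hmin hg h₁ h₂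
  · rintro M ⟨⟨v, σ, rfl⟩, ⟨v', τ, h⟩⟩
    exact Set.mem_iUnion.mpr ⟨(σ, τ), v, v', rfl, h⟩

end AlmostMalnormal

theorem almost_malnormal_number_field_general {K : Type*} [Field K] [NumberField K]
    {n : ℕ} (hmin : ∀ F : IntermediateField ℚ K, F = ⊥ ∨ F = ⊤)
    (b : Module.Basis (Fin n) ℤ (𝓞 K)) :
    (∀ (u w : (𝓞 K)ˣ), (u : 𝓞 K) ≠ 1 → (u : 𝓞 K) ≠ -1 →
      (w : 𝓞 K) ≠ 1 → (w : 𝓞 K) ≠ -1 →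
      ∀ g : GL (Fin n) ℤ,
        (g : Matrix (Fin n) (Fin n) ℤ) * piRep b u (RingEquiv.refl _) *
            ((g⁻¹ : GL (Fin n) ℤ) : Matrix (Fin n) (Fin n) ℤ) =
          piRep b w (RingEquiv.refl _) →
        (g : Matrix (Fin n) (Fin n) ℤ) ∈ G₀ b) ∧
    (∀ g : GL (Fin n) ℤ, (g : Matrix (Fin n) (Fin n) ℤ) ∉ G₀ b →
      {M | M ∈ G₀ b ∧
        (g : Matrix (Fin n) (Fin n) ℤ) * M *
          ((g⁻¹ : GL (Fin n) ℤ) : Matrix (Fin n) (Fin n) ℤ) ∈ G₀ b}.Finite) :=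
  ⟨fun _ _ _ _ hw1 hw2 g h => mem_G₀_of_conj_piRep_eq b hmin hw1 hw2 g h,
    fun _ hg => finite_setOf_mem_G₀_and_conj_mem_G₀ b hmin hg⟩

/-- Let `K` be a degree-`n` number field with no intermediate fields strictly
between `ℚ` and `K`. If `u, w` are units of `𝓞 K` different from `±1` and
`g ∈ GL(n,ℤ)` conjugates `π(u)` to `π(w)`, then `g ∈ G₀`. Consequently
`g G₀ g⁻¹ ∩ G₀` is finite for every `g ∈ GL(n,ℤ) \ G₀`. -/
theorem almost_malnormal_number_field {K : Type*} [Field K] [NumberField K]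
    {n : ℕ} (hn : 0 < n) (hrank : Module.finrank ℚ K = n)
    (hmin : ∀ F : IntermediateField ℚ K, F = ⊥ ∨ F = ⊤)
    (b : Module.Basis (Fin n) ℤ (𝓞 K)) (hb0 : b ⟨0, hn⟩ = 1) :
    (∀ (u w : (𝓞 K)ˣ), (u : 𝓞 K) ≠ 1 → (u : 𝓞 K) ≠ -1 →
      (w : 𝓞 K) ≠ 1 → (w : 𝓞 K) ≠ -1 →
      ∀ g : GL (Fin n) ℤ,
        (g : Matrix (Fin n) (Fin n) ℤ) * piRep b u (RingEquiv.refl _) *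
            ((g⁻¹ : GL (Fin n) ℤ) : Matrix (Fin n) (Fin n) ℤ) =
          piRep b w (RingEquiv.refl _) →
        (g : Matrix (Fin n) (Fin n) ℤ) ∈ G₀ b) ∧
    (∀ g : GL (Fin n) ℤ, (g : Matrix (Fin n) (Fin n) ℤ) ∉ G₀ b →
      {M | M ∈ G₀ b ∧
        (g : Matrix (Fin n) (Fin n) ℤ) * M *
          ((g⁻¹ : GL (Fin n) ℤ) : Matrix (Fin n) (Fin n) ℤ) ∈ G₀ b}.Finite) :=
  almost_malnormal_number_field_general hmin b
end

section
/- Define the map Ω_α : ℤⁿ × ℤⁿ → S¹ by Ω_α(x,y) = exp(i α xᵗ J y), where n = 2m is even and J = [[0,I_m],[−I_m,0]]. Then Ω_α is a 2-cocycle on ℤⁿ with values in S¹ (i.e., Ω_α(x,y)Ω_α(x+y,z) = Ω_α(x,y+z)Ω_α(y,z)), and Ω_α is a coboundary (of the form ∂ω for some ω : ℤⁿ → S¹) if and only if α ∈ πℤ. -/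
/-!
The exponent `xᵗ J y` is biadditive, which makes `Ω_α` a cocycle. A coboundary
`ω (x + y) ω(x)⁻¹ ω(y)⁻¹` is symmetric in `x, y`, whereas `Ω_α (eᵢ, fᵢ) = exp (iα)` and
`Ω_α (fᵢ, eᵢ) = exp (-iα)`; so a coboundary forces `exp (2iα) = 1`. Conversely, `J = A - Aᵀ` with
`A = [[0, I], [0, 0]]`, hence `xᵗ J y = q (x + y) - q x - q y - 2 yᵗ A x` for `q x = xᵗ A x`; when
`α ∈ πℤ` the even term is invisible in `S¹` and `Ω_α = ∂ (exp (iα q))`.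
-/

/-- The symplectic `2`-cochain `Ω_α(x,y) = exp(i α xᵗ J y)` on `ℤ^{2m}`,
where `J = [[0, I], [-I, 0]]`. -/
noncomputable def OmegaAlpha (m : ℕ) (α : ℝ) (x y : Fin m ⊕ Fin m → ℤ) : Circle :=
  Circle.exp (α * ((dotProduct x
    ((Matrix.fromBlocks (0 : Matrix (Fin m) (Fin m) ℤ) 1 (-1) 0).mulVec y) : ℤ) : ℝ))

open Matrix Real

theorem dotProduct_sub_transpose_mulVec {ι R : Type*} [Fintype ι] [CommRing R]
    (A : Matrix ι ι R) (x y : ι → R) :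
    x ⬝ᵥ (A - Aᵀ) *ᵥ y =
      (x + y) ⬝ᵥ A *ᵥ (x + y) - x ⬝ᵥ A *ᵥ x - y ⬝ᵥ A *ᵥ y - 2 * (y ⬝ᵥ A *ᵥ x) := by
  have transpose : x ⬝ᵥ Aᵀ *ᵥ y = y ⬝ᵥ A *ᵥ x := by
    rw [dotProduct_mulVec, vecMul_transpose, dotProduct_comm]
  simp only [sub_mulVec, dotProduct_sub, transpose, mulVec_add, dotProduct_add, add_dotProduct]
  ring

theorem circleExp_dotProduct_mulVec_cocycle {ι : Type*} [Fintype ι] (α : ℝ)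
    (M : Matrix ι ι ℤ) (x y z : ι → ℤ) :
    Circle.exp (α * ↑(x ⬝ᵥ M *ᵥ y)) * Circle.exp (α * ↑((x + y) ⬝ᵥ M *ᵥ z)) =
      Circle.exp (α * ↑(x ⬝ᵥ M *ᵥ (y + z))) * Circle.exp (α * ↑(y ⬝ᵥ M *ᵥ z)) := by
  simp only [← Circle.exp_add, mulVec_add, dotProduct_add, add_dotProduct]
  congr 1
  push_cast
  ring

theorem coboundary_comm {G H : Type*} [AddCommMagma G] [CommGroup H] (ω : G → H) (x y : G) :
    ω (x + y) * (ω x)⁻¹ * (ω y)⁻¹ = ω (y + x) * (ω y)⁻¹ * (ω x)⁻¹ := by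
  rw [add_comm, mul_right_comm]

theorem Circle.exists_int_mul_pi_of_exp_eq_exp_neg {α : ℝ}
    (h : Circle.exp α = Circle.exp (-α)) : ∃ k : ℤ, α = k * π := by
  obtain ⟨k, hk⟩ := Circle.exp_eq_exp.mp h
  exact ⟨k, by linarith⟩

theorem Circle.exp_int_mul_pi_mul_sub_two_mul (k a b : ℤ) :
    Circle.exp (k * π * ↑(a - 2 * b)) = Circle.exp (k * π * a) :=
  Circle.exp_eq_exp.mpr ⟨-(k * b), by push_cast; ring⟩

def halfSymplectic (m : ℕ) : Matrix (Fin m ⊕ Fin m) (Fin m ⊕ Fin m) ℤ := fromBlocks 0 1 0 0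

theorem fromBlocks_zero_one_neg_one_zero (m : ℕ) :
    fromBlocks (0 : Matrix (Fin m) (Fin m) ℤ) 1 (-1) 0 =
      halfSymplectic m - (halfSymplectic m)ᵀ := by
  rw [halfSymplectic, fromBlocks_transpose, sub_eq_add_neg, fromBlocks_neg, fromBlocks_add]
  simp

namespace OmegaAlpha

variable {m : ℕ}

theorem single_inl_single_inr (α : ℝ) (i : Fin m) :
    OmegaAlpha m α (Pi.single (.inl i) 1) (Pi.single (.inr i) 1) = Circle.exp α := by
  simp [OmegaAlpha]

theorem single_inr_single_inl (α : ℝ) (i : Fin m) :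
    OmegaAlpha m α (Pi.single (.inr i) 1) (Pi.single (.inl i) 1) = Circle.exp (-α) := by
  simp [OmegaAlpha]

theorem int_mul_pi_eq_coboundary (k : ℤ) (x y : Fin m ⊕ Fin m → ℤ) :
    OmegaAlpha m (k * π) x y =
      Circle.exp (k * π * ↑((x + y) ⬝ᵥ halfSymplectic m *ᵥ (x + y))) *
        (Circle.exp (k * π * ↑(x ⬝ᵥ halfSymplectic m *ᵥ x)))⁻¹ *
        (Circle.exp (k * π * ↑(y ⬝ᵥ halfSymplectic m *ᵥ y)))⁻¹ := by
  rw [OmegaAlpha, fromBlocks_zero_one_neg_one_zero, dotProduct_sub_transpose_mulVec,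
    Circle.exp_int_mul_pi_mul_sub_two_mul, ← Circle.exp_neg, ← Circle.exp_neg,
    ← Circle.exp_add, ← Circle.exp_add]
  congr 1
  push_cast
  ring

end OmegaAlpha

/-- `Ω_α` is a `2`-cocycle on `ℤ^{2m}` with values in the circle group, and it
is a coboundary if and only if `α ∈ πℤ`. -/
theorem omegaAlpha_cocycle_and_coboundary_iff {m : ℕ} (hm : 0 < m) (α : ℝ) :
    (∀ x y z : Fin m ⊕ Fin m → ℤ,
      OmegaAlpha m α x y * OmegaAlpha m α (x + y) z =
        OmegaAlpha m α x (y + z) * OmegaAlpha m α y z) ∧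
    ((∃ ω : (Fin m ⊕ Fin m → ℤ) → Circle, ∀ x y : Fin m ⊕ Fin m → ℤ,
        OmegaAlpha m α x y = ω (x + y) * (ω x)⁻¹ * (ω y)⁻¹) ↔
      ∃ k : ℤ, α = k * Real.pi) := by
  refine ⟨circleExp_dotProduct_mulVec_cocycle α _, ?_, ?_⟩
  · rintro ⟨ω, hω⟩
    obtain ⟨i⟩ := Fin.pos_iff_nonempty.mp hm
    apply Circle.exists_int_mul_pi_of_exp_eq_exp_neg
    rw [← OmegaAlpha.single_inl_single_inr α i, ← OmegaAlpha.single_inr_single_inl α i, hω, hω,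
      coboundary_comm]
  · rintro ⟨k, rfl⟩
    refine ⟨fun x => Circle.exp (k * π * ↑(x ⬝ᵥ halfSymplectic m *ᵥ x)), fun x y => ?_⟩
    exact OmegaAlpha.int_mul_pi_eq_coboundary k x y
end
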